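/- arXiv:1704.06255 — 3 statements merged into one kernel-verified Lean document; each statement's English description precedes it below -/
import Mathlib

section
/- Let G be a connected loopless graph with hyperelliptic involution ι (so G/ι is a tree). Let A and B be disjoint sets of vertices moved by ι with B = ι(A) and A ∪ B equal to the set of all vertices not fixed by ι; let E_A be the set of edges of G with both endpoints in A and E_B = ι(E_A) the set of edges with both endpoints in B. Then ι restricts to an isomorphism of the subgraph (A, E_A) onto the subgraph (B, E_B), and each of these subgraphs is a finite disjoint union of trees (a forest). -/
/-!
Preamble: finite loopless multigraphs, mixing involutions, quotients,
rotation systems and orientable genus, planar embeddings, treewidth,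
series-parallel graphs, harmonic morphisms and stable gonality.
-/

/-- Every element of `Sym2 α` is of the form `s(x, y)`. -/
theorem sym2_exists_rep {α : Type*} (s : Sym2 α) : ∃ x y, s = s(x, y) :=
  Sym2.ind (fun x y => ⟨x, y, rfl⟩) s

theorem sym2_isDiag_map {α β : Type*} (f : α → β) {s : Sym2 α} (h : s.IsDiag) :
    (s.map f).IsDiag := by
  obtain ⟨x, y, rfl⟩ := sym2_exists_rep s
  rw [Sym2.mk_isDiag_iff] at h
  simp [Sym2.map_pair_eq, Sym2.mk_isDiag_iff, h]

theorem sym2_isDiag_map_inj {α β : Type*} {f : α → β}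
    (hf : ∀ x y, f x = f y → x = y) {s : Sym2 α} (h : (s.map f).IsDiag) :
    s.IsDiag := by
  obtain ⟨x, y, rfl⟩ := sym2_exists_rep s
  rw [Sym2.map_pair_eq, Sym2.mk_isDiag_iff] at h
  rw [Sym2.mk_isDiag_iff]
  exact hf _ _ h

/-- A pair in `Sym2 α` all of whose members satisfy a predicate lifts to
`Sym2` of the subtype. -/
theorem sym2_exists_restrict {α : Type*} (P : Set α) (s : Sym2 α)
    (h : ∀ a ∈ s, a ∈ P) : ∃ t : Sym2 P, t.map Subtype.val = s := by
  obtain ⟨x, y, rfl⟩ := sym2_exists_rep s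
  exact ⟨s(⟨x, h x (by simp)⟩, ⟨y, h y (by simp)⟩), by simp [Sym2.map_pair_eq]⟩

/-- Restrict a symmetric pair to a subset containing its members. -/
noncomputable def sym2Restrict {α : Type*} (P : Set α) (s : Sym2 α)
    (h : ∀ a ∈ s, a ∈ P) : Sym2 P :=
  (sym2_exists_restrict P s h).choose

theorem sym2Restrict_spec {α : Type*} (P : Set α) (s : Sym2 α)
    (h : ∀ a ∈ s, a ∈ P) : (sym2Restrict P s h).map Subtype.val = s :=
  (sym2_exists_restrict P s h).choose_spec

/-- A finite multigraph without loops: each edge has a pair of distinct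
endpoints. -/
structure Multigraph : Type 1 where
  V : Type
  E : Type
  finV : Finite V
  finE : Finite E
  ends : E → Sym2 V
  loopless : ∀ e, ¬ (ends e).IsDiag

namespace Multigraph

instance (G : Multigraph) : Finite G.V := G.finV
instance (G : Multigraph) : Finite G.E := G.finE

/-- The underlying simple graph: two vertices are adjacent iff some edge
joins them. -/
def toSimpleGraph (G : Multigraph) : SimpleGraph G.V :=
  SimpleGraph.fromRel (fun u v => ∃ e, G.ends e = s(u, v))

/-- A multigraph is connected iff its underlying simple graph is. -/
def Connected (G : Multigraph) : Prop := G.toSimpleGraph.Connected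

/-- A (multigraph) tree: connected with `|E| + 1 = |V|`. -/
def IsTree (G : Multigraph) : Prop :=
  G.Connected ∧ Nat.card G.E + 1 = Nat.card G.V

/-- A forest: no parallel edges and the underlying simple graph is acyclic. -/
def IsForest (G : Multigraph) : Prop :=
  Function.Injective G.ends ∧ G.toSimpleGraph.IsAcyclic

/-- The (Euler) genus, i.e. first Betti number, of a connected multigraph. -/
noncomputable def eulerGenus (G : Multigraph) : ℤ :=
  (Nat.card G.E : ℤ) - (Nat.card G.V : ℤ) + 1

/-- Delete a set of edges. -/
def deleteEdges (G : Multigraph) (S : Set G.E) : Multigraph where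
  V := G.V
  E := {e : G.E // e ∉ S}
  finV := G.finV
  finE := inferInstance
  ends e := G.ends e.1
  loopless e := G.loopless e.1

/-- The induced subgraph on a set of vertices. -/
noncomputable def inducedSubgraph (G : Multigraph) (A : Set G.V) : Multigraph where
  V := ↥A
  E := {e : G.E // ∀ v ∈ G.ends e, v ∈ A}
  finV := inferInstance
  finE := inferInstance
  ends e := sym2Restrict A (G.ends e.1) e.2
  loopless e hd := G.loopless e.1
    (by rw [← sym2Restrict_spec A (G.ends e.1) e.2]; exact sym2_isDiag_map _ hd)

/-- Delete a set of vertices (and all edges meeting them). -/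
noncomputable def deleteVerts (G : Multigraph) (S : Set G.V) : Multigraph :=
  G.inducedSubgraph {v | v ∉ S}

/-- 2-edge-connectedness: connected, and still connected after deleting any
single edge. -/
def TwoEdgeConnected (G : Multigraph) : Prop :=
  G.Connected ∧ ∀ e : G.E, (G.deleteEdges {e}).Connected

/-- 3-connectedness: the graph remains connected after deleting any two
vertices. -/
def ThreeConnected (G : Multigraph) : Prop :=
  G.Connected ∧ ∀ u v : G.V, (G.deleteVerts {u, v}).Connected

/-- Isomorphisms of multigraphs. -/
structure Iso (G H : Multigraph) where
  vmap : G.V ≃ H.V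
  emap : G.E ≃ H.E
  ends_map : ∀ e, H.ends (emap e) = (G.ends e).map vmap

/-- An embedding of `G` as a sub-multigraph of `H`. -/
structure SubgraphEmbedding (G H : Multigraph) where
  vmap : G.V → H.V
  emap : G.E → H.E
  vmap_inj : Function.Injective vmap
  emap_inj : Function.Injective emap
  ends_map : ∀ e, H.ends (emap e) = (G.ends e).map vmap

/-! ### Darts, rotation systems and the orientable genus -/

/-- A dart: an edge together with an ordering of its endpoints. -/
structure Dart (G : Multigraph) where
  edge : G.E
  fst : G.V
  snd : G.V
  ends_eq : G.ends edge = s(fst, snd)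

def Dart.flip {G : Multigraph} (d : G.Dart) : G.Dart :=
  ⟨d.edge, d.snd, d.fst, by rw [d.ends_eq, Sym2.eq_swap]⟩

theorem Dart.flip_invol (G : Multigraph) :
    Function.Involutive (Dart.flip (G := G)) := fun _ => rfl

/-- The edge involution on darts. -/
def flipPerm (G : Multigraph) : Equiv.Perm G.Dart :=
  Function.Involutive.toPerm _ (Dart.flip_invol G)

/-- The number of cycles (orbits) of a permutation. -/
noncomputable def numCycles {α : Type*} (f : Equiv.Perm α) : ℕ :=
  Nat.card (Quotient (Setoid.mk f.SameCycle
    ⟨fun x => Equiv.Perm.SameCycle.refl f x, fun h => h.symm, fun h h' => h.trans h'⟩))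

/-- A rotation system (combinatorial embedding into an oriented surface):
a permutation of the darts preserving initial vertices whose orbit at each
vertex consists of all darts based there. -/
structure RotationSystem (G : Multigraph) where
  rot : Equiv.Perm G.Dart
  fst_rot : ∀ d, (rot d).fst = d.fst
  cyclic : ∀ d d' : G.Dart, d.fst = d'.fst → rot.SameCycle d d'

/-- The face-tracing permutation of a rotation system. -/
def RotationSystem.facePerm {G : Multigraph} (R : RotationSystem G) :
    Equiv.Perm G.Dart :=
  (flipPerm G).trans R.rot

/-- The number of faces of the embedding determined by a rotation system. -/
noncomputable def RotationSystem.numFaces {G : Multigraph} (R : RotationSystem G) : ℕ :=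
  numCycles R.facePerm

/-- The orientable genus of a (connected) multigraph: the least `g` such that
some rotation system satisfies Euler's formula `V - E + F = 2 - 2g`. -/
noncomputable def orientableGenus (G : Multigraph) : ℕ :=
  sInf {g : ℕ | ∃ R : G.RotationSystem,
    2 * g + Nat.card G.V + R.numFaces = Nat.card G.E + 2}

/-! ### Mixing involutions and quotients -/

/-- A mixing involution: an order-two automorphism such that any fixed edge
has its endpoints exchanged. -/
structure MixingInvolution (G : Multigraph) where
  vmap : G.V ≃ G.V
  emap : G.E ≃ G.E
  ends_map : ∀ e, G.ends (emap e) = (G.ends e).map vmap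
  vmap_invol : ∀ v, vmap (vmap v) = v
  emap_invol : ∀ e, emap (emap e) = e
  nontrivial : ¬ ((∀ v, vmap v = v) ∧ (∀ e, emap e = e))
  mixing : ∀ e x y, G.ends e = s(x, y) → emap e = e → vmap x = y

namespace MixingInvolution

variable {G : Multigraph} (ι : MixingInvolution G)

/-- An edge whose endpoints are exchanged by the involution. -/
def Exchanged (e : G.E) : Prop := ∃ x y, G.ends e = s(x, y) ∧ ι.vmap x = y

/-- The vertex identification `v ∼ ι v`. -/
def vSetoid : Setoid G.V where
  r v w := w = v ∨ w = ι.vmap v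
  iseqv := by
    refine ⟨fun v => Or.inl rfl, ?_, ?_⟩
    · rintro v w (rfl | rfl)
      · exact Or.inl rfl
      · exact Or.inr (ι.vmap_invol v).symm
    · rintro u v w (rfl | rfl) (rfl | rfl)
      · exact Or.inl rfl
      · exact Or.inr rfl
      · exact Or.inr rfl
      · exact Or.inl (ι.vmap_invol u)

/-- The identification `e ∼ ι e` on edges whose endpoints are not exchanged. -/
def eSetoid : Setoid {e : G.E // ¬ ι.Exchanged e} where
  r e f := f.1 = e.1 ∨ f.1 = ι.emap e.1
  iseqv := by
    refine ⟨fun e => Or.inl rfl, ?_, ?_⟩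
    · rintro e f (h | h)
      · exact Or.inl h.symm
      · exact Or.inr (by rw [h, ι.emap_invol])
    · rintro e f g (h1 | h1) (h2 | h2)
      · exact Or.inl (h2.trans h1)
      · exact Or.inr (by rw [h2, h1])
      · exact Or.inr (h2.trans h1)
      · exact Or.inl (by rw [h2, h1, ι.emap_invol])

theorem quotient_mk_vmap (v : G.V) :
    Quotient.mk ι.vSetoid (ι.vmap v) = Quotient.mk ι.vSetoid v :=
  (Quotient.sound (Or.inr rfl)).symm

/-- The quotient multigraph `G/ι`. -/
noncomputable def quotient : Multigraph where
  V := Quotient ι.vSetoid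
  E := Quotient ι.eSetoid
  finV := inferInstance
  finE := inferInstance
  ends := Quotient.lift
    (fun e => (G.ends e.1).map (fun v => Quotient.mk ι.vSetoid v))
    (by
      rintro a b (h | h)
      · rw [Subtype.ext h]
      · have hfun : (fun v => Quotient.mk ι.vSetoid (ι.vmap v))
            = fun v => Quotient.mk ι.vSetoid v :=
          funext fun v => ι.quotient_mk_vmap v
        show Sym2.map (fun v => Quotient.mk ι.vSetoid v) (G.ends a.1)
          = Sym2.map (fun v => Quotient.mk ι.vSetoid v) (G.ends b.1)
        rw [h, ι.ends_map, Sym2.map_map, Function.comp_def, hfun])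
  loopless := by
    refine Quotient.ind ?_
    intro e hd
    obtain ⟨x, y, hxy⟩ := sym2_exists_rep (G.ends e.1)
    rw [show (Quotient.lift
      (fun e : {e : G.E // ¬ ι.Exchanged e} =>
        (G.ends e.1).map (fun v => Quotient.mk ι.vSetoid v)) _ (Quotient.mk _ e) : Sym2 _)
      = (G.ends e.1).map (fun v => Quotient.mk ι.vSetoid v) from rfl, hxy,
      Sym2.map_pair_eq, Sym2.mk_isDiag_iff] at hd
    rcases Quotient.exact hd with h | h
    · exact G.loopless e.1 (by rw [hxy, Sym2.mk_isDiag_iff]; exact h.symm)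
    · exact e.2 ⟨x, y, hxy, h.symm⟩

end MixingInvolution

/-- A connected graph is hyperelliptic if it has a mixing involution whose
quotient is a tree. -/
def Hyperelliptic (G : Multigraph) : Prop :=
  G.Connected ∧ ∃ ι : MixingInvolution G, ι.quotient.IsTree

/-- A connected graph is bielliptic if it has a mixing involution whose
quotient has (Euler) genus one. -/
def Bielliptic (G : Multigraph) : Prop :=
  G.Connected ∧ ∃ α : MixingInvolution G, α.quotient.eulerGenus = 1

/-! ### Planar embeddings -/

/-- A (topological) embedding of a multigraph in the plane: vertices go to
distinct points, edges to arcs meeting only at common endpoints. -/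
structure PlanarEmbedding (G : Multigraph) where
  vmap : G.V → ℝ × ℝ
  arc : G.E → ℝ → ℝ × ℝ
  vmap_inj : Function.Injective vmap
  arc_cont : ∀ e, ContinuousOn (arc e) (Set.Icc 0 1)
  arc_inj : ∀ e, Set.InjOn (arc e) (Set.Icc 0 1)
  arc_ends : ∀ e, s(arc e 0, arc e 1) = (G.ends e).map vmap
  arc_arc : ∀ e e', e ≠ e' → ∀ t ∈ Set.Ioo (0:ℝ) 1, ∀ t' ∈ Set.Icc (0:ℝ) 1,
    arc e t ≠ arc e' t'
  arc_vertex : ∀ e, ∀ t ∈ Set.Ioo (0:ℝ) 1, ∀ v, arc e t ≠ vmap v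

namespace PlanarEmbedding

variable {G : Multigraph} (ρ : PlanarEmbedding G)

/-- The image of the embedded graph in the plane. -/
def image : Set (ℝ × ℝ) :=
  Set.range ρ.vmap ∪ ⋃ e, ρ.arc e '' Set.Icc 0 1

/-- The faces of the embedding are the connected components of the complement
of the image (together with the point at infinity for the unbounded one); a
set `S` of vertices lies on a common face if some component of the complement
has all of `S` in the closure of (i.e. boundary of) that component. -/
def OnCommonFace (S : Set G.V) : Prop :=
  ∃ p, p ∉ ρ.image ∧
    ∀ v ∈ S, ρ.vmap v ∈ closure (connectedComponentIn ρ.imageᶜ p)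

/-- The arcs are piecewise smooth. -/
def PiecewiseSmooth : Prop :=
  ∀ e, ∃ (n : ℕ) (t : Fin (n + 1) → ℝ), StrictMono t ∧ t 0 = 0 ∧
    t (Fin.last n) = 1 ∧
    ∀ i : Fin n, ContDiffOn ℝ (⊤ : ℕ∞) (ρ.arc e) (Set.Icc (t i.castSucc) (t i.succ))

end PlanarEmbedding

/-- Reflection of the plane across the `y`-axis. -/
def reflectY : ℝ × ℝ → ℝ × ℝ := fun p => (-p.1, p.2)

/-! ### Treewidth -/

/-- A tree decomposition of a multigraph. -/
structure TreeDecomposition (G : Multigraph) where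
  idx : Type
  T : SimpleGraph idx
  isTree : T.IsTree
  bag : idx → Set G.V
  covers_vertex : ∀ v, ∃ i, v ∈ bag i
  covers_edge : ∀ e : G.E, ∃ i, ∀ v ∈ G.ends e, v ∈ bag i
  coherent : ∀ v, (T.induce {i | v ∈ bag i}).Connected

/-- Treewidth at most `k`. -/
def TreewidthLE (G : Multigraph) (k : ℕ) : Prop :=
  ∃ D : TreeDecomposition G, ∀ i, Nat.card (D.bag i) ≤ k + 1

/-- The treewidth of a multigraph. -/
noncomputable def treewidth (G : Multigraph) : ℕ := sInf {k | G.TreewidthLE k}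

/-! ### Series-parallel graphs -/

/-- The multigraph with one edge. -/
def singleEdge : Multigraph where
  V := Bool
  E := Unit
  finV := inferInstance
  finE := inferInstance
  ends := fun _ => s(false, true)
  loopless := by simp [Sym2.mk_isDiag_iff]

/-- The identification used for the series composition: glue `t ∈ G` to
`s' ∈ H`. -/
def seriesSetoid (G H : Multigraph) (t : G.V) (s' : H.V) : Setoid (G.V ⊕ H.V) where
  r a b := a = b ∨ (a = .inl t ∧ b = .inr s') ∨ (a = .inr s' ∧ b = .inl t)
  iseqv := by
    refine ⟨fun a => Or.inl rfl, ?_, ?_⟩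
    · rintro a b (rfl | ⟨rfl, rfl⟩ | ⟨rfl, rfl⟩) <;> tauto
    · rintro a b c (rfl | ⟨rfl, rfl⟩ | ⟨rfl, rfl⟩)
        (h | ⟨h1, rfl⟩ | ⟨h1, rfl⟩) <;> simp_all

/-- Series composition of two-terminal graphs. -/
def seriesComp (G H : Multigraph) (t : G.V) (s' : H.V) : Multigraph where
  V := Quotient (seriesSetoid G H t s')
  E := G.E ⊕ H.E
  finV := inferInstance
  finE := inferInstance
  ends e := match e with
    | .inl e => (G.ends e).map (fun v => Quotient.mk _ (Sum.inl v))
    | .inr e => (H.ends e).map (fun v => Quotient.mk _ (Sum.inr v))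
  loopless := by
    rintro (e | e) hd
    · refine G.loopless e (sym2_isDiag_map_inj (f := fun v => Quotient.mk
        (seriesSetoid G H t s') (Sum.inl v)) ?_ hd)
      intro x y hq
      rcases Quotient.exact hq with h | ⟨h1, h2⟩ | ⟨h1, h2⟩
      · exact Sum.inl.inj h
      · exact absurd h2 (by simp)
      · exact absurd h1 (by simp)
    · refine H.loopless e (sym2_isDiag_map_inj (f := fun v => Quotient.mk
        (seriesSetoid G H t s') (Sum.inr v)) ?_ hd)
      intro x y hq
      rcases Quotient.exact hq with h | ⟨h1, h2⟩ | ⟨h1, h2⟩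
      · exact Sum.inr.inj h
      · exact absurd h1 (by simp)
      · exact absurd h2 (by simp)

/-- The identification used for the parallel composition: glue `s ∈ G` to
`s' ∈ H` and `t ∈ G` to `t' ∈ H`. -/
def parallelSetoid (G H : Multigraph) (s t : G.V) (s' t' : H.V)
    (hst : s ≠ t) (hst' : s' ≠ t') : Setoid (G.V ⊕ H.V) where
  r a b := a = b ∨ (a = .inl s ∧ b = .inr s') ∨ (a = .inr s' ∧ b = .inl s)
    ∨ (a = .inl t ∧ b = .inr t') ∨ (a = .inr t' ∧ b = .inl t)
  iseqv := by
    refine ⟨fun a => Or.inl rfl, ?_, ?_⟩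
    · rintro a b (rfl | ⟨rfl, rfl⟩ | ⟨rfl, rfl⟩ | ⟨rfl, rfl⟩ | ⟨rfl, rfl⟩) <;> tauto
    · rintro a b c (rfl | ⟨rfl, rfl⟩ | ⟨rfl, rfl⟩ | ⟨rfl, rfl⟩ | ⟨rfl, rfl⟩)
        (h | ⟨h1, rfl⟩ | ⟨h1, rfl⟩ | ⟨h1, rfl⟩ | ⟨h1, rfl⟩) <;> simp_all

/-- Parallel composition of two-terminal graphs. -/
def parallelComp (G H : Multigraph) (s t : G.V) (s' t' : H.V)
    (hst : s ≠ t) (hst' : s' ≠ t') : Multigraph where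
  V := Quotient (parallelSetoid G H s t s' t' hst hst')
  E := G.E ⊕ H.E
  finV := inferInstance
  finE := inferInstance
  ends e := match e with
    | .inl e => (G.ends e).map (fun v => Quotient.mk _ (Sum.inl v))
    | .inr e => (H.ends e).map (fun v => Quotient.mk _ (Sum.inr v))
  loopless := by
    rintro (e | e) hd
    · refine G.loopless e (sym2_isDiag_map_inj (f := fun v => Quotient.mk
        (parallelSetoid G H s t s' t' hst hst') (Sum.inl v)) ?_ hd)
      intro x y hq
      rcases Quotient.exact hq with h | ⟨h1, h2⟩ | ⟨h1, h2⟩ | ⟨h1, h2⟩ | ⟨h1, h2⟩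
      · exact Sum.inl.inj h
      · exact absurd h2 (by simp)
      · exact absurd h1 (by simp)
      · exact absurd h2 (by simp)
      · exact absurd h1 (by simp)
    · refine H.loopless e (sym2_isDiag_map_inj (f := fun v => Quotient.mk
        (parallelSetoid G H s t s' t' hst hst') (Sum.inr v)) ?_ hd)
      intro x y hq
      rcases Quotient.exact hq with h | ⟨h1, h2⟩ | ⟨h1, h2⟩ | ⟨h1, h2⟩ | ⟨h1, h2⟩
      · exact Sum.inr.inj h
      · exact absurd h1 (by simp)
      · exact absurd h2 (by simp)
      · exact absurd h1 (by simp)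
      · exact absurd h2 (by simp)

/-- Two-terminal series-parallel graphs, built recursively from a single edge
by series and parallel composition. -/
inductive IsSeriesParallel : (K : Multigraph) → K.V → K.V → Prop where
  | single : IsSeriesParallel singleEdge false true
  | series {G H : Multigraph} {s t : G.V} {s' t' : H.V} :
      IsSeriesParallel G s t → IsSeriesParallel H s' t' →
      IsSeriesParallel (seriesComp G H t s')
        (Quotient.mk _ (Sum.inl s)) (Quotient.mk _ (Sum.inr t'))
  | parallel {G H : Multigraph} {s t : G.V} {s' t' : H.V}
      (hst : s ≠ t) (hst' : s' ≠ t') :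
      IsSeriesParallel G s t → IsSeriesParallel H s' t' →
      IsSeriesParallel (parallelComp G H s t s' t' hst hst')
        (Quotient.mk _ (Sum.inl s)) (Quotient.mk _ (Sum.inl t))

/-! ### Harmonic morphisms, refinements and stable gonality -/

/-- A homomorphism of multigraphs sending edges to edges. -/
structure GraphHom (G H : Multigraph) where
  fV : G.V → H.V
  fE : G.E → H.E
  ends_map : ∀ e, H.ends (fE e) = (G.ends e).map fV

namespace GraphHom

variable {G H : Multigraph} (φ : GraphHom G H)

/-- Harmonicity: at every vertex `v`, the number of edges at `v` above a given
edge at `φ v` does not depend on the chosen edge. -/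
def IsHarmonic : Prop :=
  ∀ v : G.V, ∀ e₁ e₂ : H.E, φ.fV v ∈ H.ends e₁ → φ.fV v ∈ H.ends e₂ →
    Nat.card {e : G.E // v ∈ G.ends e ∧ φ.fE e = e₁}
      = Nat.card {e : G.E // v ∈ G.ends e ∧ φ.fE e = e₂}

def Nonconstant : Prop := ∃ v w, φ.fV v ≠ φ.fV w

/-- The morphism has degree `d`: every edge downstairs has exactly `d`
preimages. -/
def HasDegree (d : ℕ) : Prop :=
  ∀ e' : H.E, Nat.card {e : G.E // φ.fE e = e'} = d

end GraphHom

/-- Subdivision of the edge `e` (with endpoints `x`, `y`) by a new midpoint. -/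
def subdivide (G : Multigraph) (e : G.E) (x y : G.V)
    (h : G.ends e = s(x, y)) : Multigraph where
  V := G.V ⊕ Unit
  E := {f : G.E // f ≠ e} ⊕ Bool
  finV := inferInstance
  finE := inferInstance
  ends f := match f with
    | .inl f => (G.ends f.1).map Sum.inl
    | .inr false => s(.inl x, .inr ())
    | .inr true => s(.inl y, .inr ())
  loopless := by
    rintro (f | b) hd
    · exact G.loopless f.1 (sym2_isDiag_map_inj
        (fun x y hxy => Sum.inl.inj hxy) hd)
    · cases b <;> simp [Sym2.mk_isDiag_iff] at hd

/-- Attach a new leaf at the vertex `v`. -/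
def addLeaf (G : Multigraph) (v : G.V) : Multigraph where
  V := G.V ⊕ Unit
  E := G.E ⊕ Unit
  finV := inferInstance
  finE := inferInstance
  ends f := match f with
    | .inl f => (G.ends f).map Sum.inl
    | .inr _ => s(.inl v, .inr ())
  loopless := by
    rintro (f | u) hd
    · exact G.loopless f (sym2_isDiag_map_inj
        (fun x y hxy => Sum.inl.inj hxy) hd)
    · simp [Sym2.mk_isDiag_iff] at hd

/-- `IsRefinement G H` : `H` is a refinement of `G`, i.e. `H` is obtained from
(an isomorphic copy of) `G` by repeatedly subdividing edges and attaching
leaves (thus attaching trees). -/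
inductive IsRefinement : Multigraph → Multigraph → Prop where
  | base {G H : Multigraph} : Nonempty (Iso G H) → IsRefinement G H
  | subdivide {G H : Multigraph} (e : H.E) (x y : H.V) (h : H.ends e = s(x, y)) :
      IsRefinement G H → IsRefinement G (H.subdivide e x y h)
  | leaf {G H : Multigraph} (v : H.V) :
      IsRefinement G H → IsRefinement G (H.addLeaf v)

/-- The stable gonality of a multigraph: the least degree of a nonconstant
finite harmonic morphism from a refinement of `G` to a tree. -/
noncomputable def stableGonality (G : Multigraph) : ℕ :=
  sInf {d : ℕ | ∃ (H T : Multigraph) (φ : GraphHom H T),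
    IsRefinement G H ∧ T.IsTree ∧ φ.Nonconstant ∧ φ.IsHarmonic ∧ φ.HasDegree d}

/-! ### Some concrete graphs -/

/-- The `d × n` grid graph. -/
def gridGraph (d n : ℕ) : Multigraph where
  V := Fin d × Fin n
  E := (Fin (d - 1) × Fin n) ⊕ (Fin d × Fin (n - 1))
  finV := inferInstance
  finE := inferInstance
  ends e := match e with
    | .inl (i, j) => s((⟨i.1, by have := i.2; omega⟩, j), (⟨i.1 + 1, by have := i.2; omega⟩, j))
    | .inr (i, j) => s((i, ⟨j.1, by have := j.2; omega⟩), (i, ⟨j.1 + 1, by have := j.2; omega⟩))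
  loopless := by
    rintro (⟨i, j⟩ | ⟨i, j⟩) hd <;>
      simp [Sym2.mk_isDiag_iff, Prod.ext_iff, Fin.ext_iff] at hd

/-- The complete bipartite graph `K_{d,n}`. -/
def completeBipartite (d n : ℕ) : Multigraph where
  V := Fin d ⊕ Fin n
  E := Fin d × Fin n
  finV := inferInstance
  finE := inferInstance
  ends e := s(.inl e.1, .inr e.2)
  loopless := by intro e; simp [Sym2.mk_isDiag_iff]

/-- Add a single new edge joining the (distinct) vertices `a` and `b`. -/
def addEdge (G : Multigraph) (a b : G.V) (h : a ≠ b) : Multigraph where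
  V := G.V
  E := G.E ⊕ Unit
  finV := G.finV
  finE := inferInstance
  ends e := match e with
    | .inl e => G.ends e
    | .inr _ => s(a, b)
  loopless := by
    rintro (e | u) hd
    · exact G.loopless e hd
    · rw [Sym2.mk_isDiag_iff] at hd; exact h hd

end Multigraph



open Function

/-- A connected simple graph on a finite vertex type has at least `|V| - 1` edges. -/
lemma aux_conn_card_le {V : Type*} [Finite V] {G : SimpleGraph V} (h : G.Connected) :
    Nat.card V ≤ Nat.card G.edgeSet + 1 := by
  classical
  obtain ⟨r⟩ := h.nonempty
  have key : ∀ v : V, v ≠ r → ∃ u, G.Adj v u ∧ G.dist u r < G.dist v r := by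
    intro v hv
    obtain ⟨p, hp⟩ := (h.preconnected v r).exists_walk_length_eq_dist
    cases p with
    | nil => exact absurd rfl hv
    | cons ha q =>
      refine ⟨_, ha, ?_⟩
      have h1 : G.dist _ r ≤ q.length := SimpleGraph.dist_le q
      simp only [SimpleGraph.Walk.length_cons] at hp
      omega
  set f : {v : V // v ≠ r} → G.edgeSet := fun v =>
    ⟨s(v.1, (key v.1 v.2).choose), (key v.1 v.2).choose_spec.1⟩ with hf
  have finj : Injective f := by
    rintro ⟨v, hv⟩ ⟨w, hw⟩ hvw
    simp only [hf, Subtype.mk.injEq, Sym2.eq_iff] at hvw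
    rcases Sym2.eq_iff.mp (congrArg Subtype.val hvw) with ⟨rfl, _⟩ | ⟨h1, h2⟩
    · rfl
    · exfalso
      have c1 := (key v hv).choose_spec.2
      have c2 := (key w hw).choose_spec.2
      rw [h2] at c1
      rw [← h1] at c2
      omega
  have hle : Nat.card {v : V // v ≠ r} ≤ Nat.card G.edgeSet :=
    Nat.card_le_card_of_injective f finj
  have : Nat.card {v : V // v ≠ r} = Nat.card V - 1 := by
    haveI : Fintype V := Fintype.ofFinite V
    rw [Nat.card_eq_fintype_card, Nat.card_eq_fintype_card]
    have := Fintype.card_subtype_compl (fun v : V => v = r)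
    simpa [Fintype.card_subtype_eq] using this
  have hpos : 0 < Nat.card V := Nat.card_pos_iff.mpr ⟨⟨r⟩, inferInstance⟩
  omega

/-- A connected simple graph with at most `|V| - 1` edges is acyclic. -/
lemma aux_acyclic_of_card {V : Type*} [Finite V] {G : SimpleGraph V} (hc : G.Connected)
    (hcard : Nat.card G.edgeSet + 1 ≤ Nat.card V) : G.IsAcyclic := by
  classical
  rw [SimpleGraph.isAcyclic_iff_forall_adj_isBridge]
  intro v w hadj
  by_contra hnb
  rw [SimpleGraph.isBridge_iff, not_not] at hnb
  have hreach : (G \ SimpleGraph.fromEdgeSet {s(v, w)}).Reachable v w := by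
    exact hnb
  set G' := G \ SimpleGraph.fromEdgeSet {s(v, w)} with hG'
  have hadj' : ∀ a b : V, G.Adj a b → G'.Reachable a b := by
    intro a b hab
    by_cases he : s(a, b) = s(v, w)
    · rw [Sym2.eq_iff] at he
      rcases he with ⟨rfl, rfl⟩ | ⟨rfl, rfl⟩
      · exact hreach
      · exact hreach.symm
    · refine SimpleGraph.Adj.reachable ?_
      rw [hG', SimpleGraph.sdiff_adj]
      refine ⟨hab, ?_⟩
      rw [SimpleGraph.fromEdgeSet_adj]
      rintro ⟨hmem, -⟩
      exact he hmem
  have hconn' : G'.Connected := by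
    rw [SimpleGraph.connected_iff]
    refine ⟨?_, hc.nonempty⟩
    intro a b
    have hw := (hc.preconnected a b).some
    clear hreach
    induction hw with
    | nil => exact SimpleGraph.Reachable.refl _
    | cons ha _ ih => exact (hadj' _ _ ha).trans ih
  have hE' : G'.edgeSet = G.edgeSet \ {s(v, w)} := by
    rw [hG', SimpleGraph.edgeSet_sdiff, SimpleGraph.edgeSet_fromEdgeSet,
      SimpleGraph.edgeSet_sdiff_sdiff_isDiag]
  have hle := aux_conn_card_le hconn'
  rw [hE'] at hle
  have hmem : s(v, w) ∈ G.edgeSet := hadj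
  have h1 : Nat.card ↥(G.edgeSet \ {s(v, w)}) = G.edgeSet.ncard - 1 := by
    rw [Nat.card_coe_set_eq, Set.ncard_diff_singleton_of_mem hmem]
  have h2 : Nat.card G.edgeSet = G.edgeSet.ncard := Nat.card_coe_set_eq _
  have hpos : 0 < G.edgeSet.ncard := by
    rw [← h2]
    exact Nat.card_pos_iff.mpr ⟨⟨_, hmem⟩, inferInstance⟩
  omega

open Multigraph in
/-- If a multigraph is a tree (connected with `|E| + 1 = |V|`), then its `ends`
map is injective and its underlying simple graph is acyclic. -/
lemma aux_tree_props (Q : Multigraph) (h : Q.IsTree) :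
    Function.Injective Q.ends ∧ Q.toSimpleGraph.IsAcyclic := by
  classical
  obtain ⟨hc, hcard⟩ := h
  have hmem : ∀ e : Q.E, Q.ends e ∈ Q.toSimpleGraph.edgeSet := by
    intro e
    obtain ⟨x, y, hxy⟩ := sym2_exists_rep (Q.ends e)
    have hne : x ≠ y := by
      intro hxyeq
      exact Q.loopless e (by rw [hxy, Sym2.mk_isDiag_iff]; exact hxyeq)
    rw [hxy]
    exact ⟨hne, Or.inl ⟨e, hxy⟩⟩
  set g : Q.E → Q.toSimpleGraph.edgeSet := fun e => ⟨Q.ends e, hmem e⟩ with hg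
  have gsurj : Function.Surjective g := by
    rintro ⟨s, hs⟩
    obtain ⟨u, v, rfl⟩ := sym2_exists_rep s
    obtain ⟨hne, he⟩ := hs
    rcases he with ⟨e, he⟩ | ⟨e, he⟩
    · exact ⟨e, Subtype.ext he⟩
    · exact ⟨e, Subtype.ext (by rw [hg]; simp only; rw [he, Sym2.eq_swap])⟩
  have hE : Nat.card Q.toSimpleGraph.edgeSet ≤ Nat.card Q.E :=
    Nat.card_le_card_of_surjective g gsurj
  have hle := aux_conn_card_le hc
  constructor
  · have gbij : Function.Bijective g :=
      gsurj.bijective_of_nat_card_le (by omega)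
    intro e f hef
    exact gbij.1 (Subtype.ext hef)
  · exact aux_acyclic_of_card hc (by omega)

open Multigraph in
/-- A sub-multigraph of a graph with injective `ends` and acyclic underlying
simple graph is a forest. -/
lemma aux_forest_of_embedding (G H : Multigraph) (f : SubgraphEmbedding G H)
    (hinj : Function.Injective H.ends) (hac : H.toSimpleGraph.IsAcyclic) :
    G.IsForest := by
  constructor
  · intro e e' hee
    refine f.emap_inj (hinj ?_)
    rw [f.ends_map, f.ends_map, hee]
  · have hmap : ∀ {a b : G.V}, G.toSimpleGraph.Adj a b →
        H.toSimpleGraph.Adj (f.vmap a) (f.vmap b) := by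
      rintro a b ⟨hne, hab⟩
      refine ⟨fun hc => hne (f.vmap_inj hc), ?_⟩
      rcases hab with ⟨e, he⟩ | ⟨e, he⟩
      · exact Or.inl ⟨f.emap e, by rw [f.ends_map, he, Sym2.map_pair_eq]⟩
      · exact Or.inr ⟨f.emap e, by rw [f.ends_map, he, Sym2.map_pair_eq]⟩
    let φ : G.toSimpleGraph →g H.toSimpleGraph := ⟨f.vmap, hmap⟩
    intro v c hc
    exact hac (c.map φ) (hc.map (f.vmap_inj : Function.Injective φ))

open Multigraph in
/-- If a set of vertices is disjoint from its image under a mixing involution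
whose quotient is a tree, the induced subgraph embeds into the quotient tree,
hence is a forest. -/
lemma aux_induced_forest (G : Multigraph) (ι : MixingInvolution G)
    (hι : ι.quotient.IsTree) (S : Set G.V)
    (hS : Disjoint S (ι.vmap '' S)) : (G.inducedSubgraph S).IsForest := by
  have hnotex : ∀ e : (G.inducedSubgraph S).E, ¬ ι.Exchanged e.1 := by
    rintro ⟨e, he⟩ ⟨x, y, hxy, hvx⟩
    have hxS : x ∈ S := he x (by rw [hxy]; simp)
    have hyS : y ∈ S := he y (by rw [hxy]; simp)
    exact Set.disjoint_left.mp hS hyS ⟨x, hxS, hvx⟩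
  have hends_mem : ∀ (e : G.E) (v : G.V), v ∈ G.ends (ι.emap e) ↔
      ∃ u ∈ G.ends e, ι.vmap u = v := by
    intro e v
    rw [ι.ends_map]
    exact Sym2.mem_map
  refine aux_forest_of_embedding _ ι.quotient
    ⟨fun v => Quotient.mk ι.vSetoid v.1,
     fun e => Quotient.mk ι.eSetoid ⟨e.1, hnotex e⟩, ?_, ?_, ?_⟩
    (aux_tree_props _ hι).1 (aux_tree_props _ hι).2
  · rintro ⟨v, hv⟩ ⟨w, hw⟩ hvw
    rcases Quotient.exact hvw with h | h
    · exact Subtype.ext h.symm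
    · exact absurd (Set.disjoint_left.mp hS (h ▸ hw) ⟨v, hv, rfl⟩) not_false
  · rintro ⟨e, he⟩ ⟨f, hf⟩ hef
    rcases Quotient.exact hef with h | h
    · exact Subtype.ext h.symm
    · exfalso
      obtain ⟨x, y, hxy⟩ := sym2_exists_rep (G.ends e)
      have hxS : x ∈ S := he x (by rw [hxy]; simp)
      have h' : f = ι.emap e := h
      have : ι.vmap x ∈ G.ends f := by
        rw [h', (hends_mem e (ι.vmap x))]
        exact ⟨x, by rw [hxy]; simp, rfl⟩
      exact Set.disjoint_left.mp hS (hf _ this) ⟨x, hxS, rfl⟩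
  · rintro ⟨e, he⟩
    show Sym2.map (fun v => Quotient.mk ι.vSetoid v) (G.ends e)
      = Sym2.map _ (sym2Restrict S (G.ends e) he)
    conv_lhs => rw [← sym2Restrict_spec S (G.ends e) he]
    rw [Sym2.map_map]
    rfl

open Multigraph in
/-- For a hyperelliptic graph with involution `ι` and `A`, `B`
disjoint sets of moved vertices with `B = ι(A)` and `A ∪ B` all moved
vertices: `ι` carries the edges within `A` onto the edges within `B`,
restricts to an isomorphism of the subgraph `(A, E_A)` onto `(B, E_B)`, and
both subgraphs are forests. -/
theorem involution_subgraphs_are_forests (G : Multigraph) (hG : G.Connected)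
    (ι : MixingInvolution G) (hι : ι.quotient.IsTree)
    (A B : Set G.V) (hAB : Disjoint A B) (hB : B = ι.vmap '' A)
    (hcover : A ∪ B = {v : G.V | ι.vmap v ≠ v}) :
    ι.emap '' {e : G.E | ∀ v ∈ G.ends e, v ∈ A}
      = {e : G.E | ∀ v ∈ G.ends e, v ∈ B} ∧
    (∃ φ : Iso (G.inducedSubgraph A) (G.inducedSubgraph B),
      (∀ v : (G.inducedSubgraph A).V, (φ.vmap v).val = ι.vmap v.val) ∧
      (∀ e : (G.inducedSubgraph A).E, (φ.emap e).val = ι.emap e.val)) ∧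
    (G.inducedSubgraph A).IsForest ∧ (G.inducedSubgraph B).IsForest := by

  have hA' : ι.vmap '' B = A := by
    rw [hB]
    ext x
    simp only [Set.mem_image]
    constructor
    · rintro ⟨b, ⟨a, ha, rfl⟩, rfl⟩
      rw [ι.vmap_invol]
      exact ha
    · intro hx
      exact ⟨ι.vmap x, ⟨x, hx, rfl⟩, ι.vmap_invol x⟩
  have memB : ∀ v : G.V, v ∈ A → ι.vmap v ∈ B := fun v hv => hB ▸ ⟨v, hv, rfl⟩
  have memA : ∀ v : G.V, v ∈ B → ι.vmap v ∈ A := fun v hv => hA' ▸ ⟨v, hv, rfl⟩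
  have hEfwd : ∀ e : G.E, (∀ v ∈ G.ends e, v ∈ A) →
      ∀ v ∈ G.ends (ι.emap e), v ∈ B := by
    intro e he v hv
    rw [ι.ends_map, Sym2.mem_map] at hv
    obtain ⟨u, hu, rfl⟩ := hv
    exact memB u (he u hu)
  have hEbwd : ∀ e : G.E, (∀ v ∈ G.ends e, v ∈ B) →
      ∀ v ∈ G.ends (ι.emap e), v ∈ A := by
    intro e he v hv
    rw [ι.ends_map, Sym2.mem_map] at hv
    obtain ⟨u, hu, rfl⟩ := hv
    exact memA u (he u hu)
  refine ⟨?_, ?_, ?_, ?_⟩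
  · ext e
    simp only [Set.mem_image, Set.mem_setOf_eq]
    constructor
    · rintro ⟨f, hf, rfl⟩
      exact hEfwd f hf
    · intro he
      exact ⟨ι.emap e, hEbwd e he, ι.emap_invol e⟩
  · refine ⟨⟨⟨fun v => ⟨ι.vmap v.1, memB v.1 v.2⟩, fun v => ⟨ι.vmap v.1, memA v.1 v.2⟩,
      fun v => Subtype.ext (ι.vmap_invol v.1), fun v => Subtype.ext (ι.vmap_invol v.1)⟩,
      ⟨fun e => ⟨ι.emap e.1, hEfwd e.1 e.2⟩, fun e => ⟨ι.emap e.1, hEbwd e.1 e.2⟩,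
      fun e => Subtype.ext (ι.emap_invol e.1), fun e => Subtype.ext (ι.emap_invol e.1)⟩,
      ?_⟩, fun v => rfl, fun e => rfl⟩
    rintro ⟨e, he⟩
    apply Sym2.map.injective Subtype.val_injective
    show Sym2.map (Subtype.val : ↥B → G.V)
        (sym2Restrict B (G.ends (ι.emap e)) (hEfwd e he))
      = Sym2.map Subtype.val
        (Sym2.map (fun v : ↥A => (⟨ι.vmap v.1, memB v.1 v.2⟩ : ↥B))
          (sym2Restrict A (G.ends e) he))
    rw [sym2Restrict_spec, Sym2.map_map]
    have hcomp : (Subtype.val ∘ fun v : ↥A => (⟨ι.vmap v.1, memB v.1 v.2⟩ : ↥B))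
        = ι.vmap ∘ Subtype.val := rfl
    rw [hcomp, ← Sym2.map_map]
    show _ = Sym2.map ι.vmap (Sym2.map Subtype.val (sym2Restrict A (G.ends e) he))
    rw [sym2Restrict_spec, ι.ends_map]
  · exact aux_induced_forest G ι hι A (by rw [← hB]; exact hAB)
  · exact aux_induced_forest G ι hι B (by rw [hA']; exact hAB.symm)
end

section
/- For all integers 3 ≤ d ≤ n, the complete bipartite graph K_{d,n} has stable gonality exactly d: identifying all vertices in the part of size d yields a degree-d harmonic morphism from K_{d,n} to a tree (so the stable gonality is at most d), and the treewidth of K_{d,n} equals d, which is a lower bound for stable gonality. -/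
/-! ### Auxiliary lemmas -/

namespace Multigraph

open SimpleGraph

lemma toSimpleGraph_adj {G : Multigraph} {u v : G.V} :
    G.toSimpleGraph.Adj u v ↔ u ≠ v ∧ ∃ e, G.ends e = s(u, v) := by
  show (SimpleGraph.fromRel _).Adj u v ↔ _
  rw [SimpleGraph.fromRel_adj]
  constructor
  · rintro ⟨hne, (⟨e, he⟩ | ⟨e, he⟩)⟩
    · exact ⟨hne, e, he⟩
    · exact ⟨hne, e, by rw [he, Sym2.eq_swap]⟩
  · rintro ⟨hne, e, he⟩
    exact ⟨hne, Or.inl ⟨e, he⟩⟩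

lemma ne_of_ends {G : Multigraph} {e : G.E} {u v : G.V} (h : G.ends e = s(u, v)) :
    u ≠ v := by
  intro huv
  exact G.loopless e (by rw [h, Sym2.mk_isDiag_iff]; exact huv)

lemma adj_of_ends {G : Multigraph} {e : G.E} {u v : G.V} (h : G.ends e = s(u, v)) :
    G.toSimpleGraph.Adj u v :=
  toSimpleGraph_adj.2 ⟨ne_of_ends h, e, h⟩

/-- A connected multigraph has at least `|V| - 1` edges. -/
lemma card_le_of_connected {G : Multigraph} (h : G.Connected) :
    Nat.card G.V ≤ Nat.card G.E + 1 := by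
  classical
  have hne : Nonempty G.V := h.nonempty
  obtain ⟨r⟩ := hne
  -- for each `v ≠ r` choose an edge `e` with ends `s(v, u)` where `u` is closer to `r`
  have key : ∀ v : G.V, v ≠ r → ∃ (e : G.E) (u : G.V),
      G.ends e = s(v, u) ∧ G.toSimpleGraph.dist r u < G.toSimpleGraph.dist r v := by
    intro v hv
    obtain ⟨w, hw⟩ := (h.preconnected r v).exists_walk_length_eq_dist
    have hw' : w.reverse.length = G.toSimpleGraph.dist r v := by
      rw [SimpleGraph.Walk.length_reverse, hw]
    rcases hrev : w.reverse with _ | ⟨hadj, q⟩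
    · exact absurd rfl hv
    · rw [hrev] at hw'
      simp only [SimpleGraph.Walk.length_cons] at hw'
      rename_i u
      obtain ⟨hne', e, he⟩ := toSimpleGraph_adj.1 hadj
      refine ⟨e, u, he, ?_⟩
      have : G.toSimpleGraph.dist r u ≤ q.reverse.length := SimpleGraph.dist_le _
      rw [SimpleGraph.Walk.length_reverse] at this
      omega
  choose f u hf hdist using key
  have hinj : Function.Injective
      (fun v : {v : G.V // v ≠ r} => f v.1 v.2) := by
    rintro ⟨v₁, h₁⟩ ⟨v₂, h₂⟩ heq
    simp only at heq
    have : G.ends (f v₁ h₁) = G.ends (f v₂ h₂) := by rw [heq]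
    rw [hf v₁ h₁, hf v₂ h₂, Sym2.eq_iff] at this
    rcases this with ⟨hv, -⟩ | ⟨hv, hu⟩
    · exact Subtype.ext hv
    · exfalso
      have d1 := hdist v₁ h₁
      have d2 := hdist v₂ h₂
      rw [hu] at d1
      rw [← hv] at d2
      omega
  have hcard : Nat.card {v : G.V // v ≠ r} ≤ Nat.card G.E :=
    Nat.card_le_card_of_injective _ hinj
  have : Nat.card {v : G.V // v ≠ r} = Nat.card G.V - 1 := by
    haveI : Fintype G.V := Fintype.ofFinite _
    rw [Nat.card_eq_fintype_card, Nat.card_eq_fintype_card]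
    rw [Fintype.card_subtype_compl (p := fun v => v = r),
      Fintype.card_subtype_eq r]
  haveI : Nonempty G.V := ⟨r⟩
  have hpos : 0 < Nat.card G.V := Nat.card_pos
  omega

end Multigraph

namespace Multigraph

/-- The star tree with `n` leaves, as a multigraph. -/
def starTree (n : ℕ) : Multigraph where
  V := Unit ⊕ Fin n
  E := Fin n
  finV := inferInstance
  finE := inferInstance
  ends j := s(.inl (), .inr j)
  loopless := by intro e; simp [Sym2.mk_isDiag_iff]

lemma starTree_ends (n : ℕ) (j : Fin n) :
    (starTree n).ends j = s(Sum.inl (), Sum.inr j) := rfl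

lemma starTree_isTree (n : ℕ) : (starTree n).IsTree := by
  constructor
  · rw [Connected, SimpleGraph.connected_iff]
    refine ⟨?_, ⟨Sum.inl ()⟩⟩
    have hadj : ∀ j : Fin n,
        (starTree n).toSimpleGraph.Adj (Sum.inl ()) (Sum.inr j) :=
      fun j => adj_of_ends (starTree_ends n j)
    rintro (⟨⟩ | j) (⟨⟩ | j')
    · exact SimpleGraph.Reachable.refl _
    · exact (hadj j').reachable
    · exact (hadj j).reachable.symm
    · exact (hadj j).reachable.symm.trans (hadj j').reachable
  · show Nat.card (Fin n) + 1 = Nat.card (Unit ⊕ Fin n)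
    simp [Nat.card_eq_fintype_card]
    omega

/-- The degree-`d` harmonic morphism collapsing the left part of `K_{d,n}`. -/
def bipartiteToStar (d n : ℕ) : GraphHom (completeBipartite d n) (starTree n) where
  fV v := match v with
    | .inl _ => .inl ()
    | .inr j => .inr j
  fE e := e.2
  ends_map e := by
    show s(Sum.inl (), Sum.inr e.2) = (s(Sum.inl e.1, Sum.inr e.2)).map _
    rfl

lemma bipartiteToStar_nonconstant (d n : ℕ) (hd : 0 < d) (hn : 0 < n) :
    (bipartiteToStar d n).Nonconstant := by
  refine ⟨Sum.inl ⟨0, hd⟩, Sum.inr ⟨0, hn⟩, ?_⟩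
  simp [bipartiteToStar]
  exact Sum.inl_ne_inr

lemma bipartiteToStar_card_one (d n : ℕ) (i : Fin d) (j : Fin n) :
    Nat.card {e : (completeBipartite d n).E //
      Sum.inl i ∈ (completeBipartite d n).ends e ∧ (bipartiteToStar d n).fE e = j} = 1 := by
  rw [Nat.card_eq_one_iff_unique]
  constructor
  · constructor
    rintro ⟨⟨a, b⟩, hm, hE⟩ ⟨⟨a', b'⟩, hm', hE'⟩
    have ha : a = i := by
      rcases Sym2.mem_iff.1 hm with h | h
      · exact (Sum.inl.inj h).symm
      · exact absurd h (by simp)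
    have ha' : a' = i := by
      rcases Sym2.mem_iff.1 hm' with h | h
      · exact (Sum.inl.inj h).symm
      · exact absurd h (by simp)
    have hb : b = j := hE
    have hb' : b' = j := hE'
    subst ha ha' hb hb'
    rfl
  · exact ⟨⟨(i, j), Sym2.mem_mk_left _ _, rfl⟩⟩

lemma bipartiteToStar_harmonic (d n : ℕ) : (bipartiteToStar d n).IsHarmonic := by
  rintro (i | j) e₁ e₂ h₁ h₂
  · exact (bipartiteToStar_card_one d n i e₁).trans (bipartiteToStar_card_one d n i e₂).symm
  · have he₁ : e₁ = j := by
      rcases Sym2.mem_iff.1 h₁ with h | h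
      · exact absurd h (by simp [bipartiteToStar])
      · exact (Sum.inr.inj h).symm
    have he₂ : e₂ = j := by
      rcases Sym2.mem_iff.1 h₂ with h | h
      · exact absurd h (by simp [bipartiteToStar])
      · exact (Sum.inr.inj h).symm
    subst he₁ he₂
    rfl

lemma bipartiteToStar_degree (d n : ℕ) : (bipartiteToStar d n).HasDegree d := by
  intro j
  have : {e : (completeBipartite d n).E // (bipartiteToStar d n).fE e = j} ≃ Fin d := by
    refine ⟨fun e => e.1.1, fun i => ⟨(i, j), rfl⟩, ?_, fun i => rfl⟩
    rintro ⟨⟨a, b⟩, hb⟩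
    have : b = j := hb
    subst this
    rfl
  rw [Nat.card_congr this, Nat.card_eq_fintype_card, Fintype.card_fin]

lemma isRefinement_self (G : Multigraph) : IsRefinement G G :=
  .base ⟨⟨Equiv.refl _, Equiv.refl _, fun e => by
    have : (G.ends e).map (Equiv.refl G.V) = G.ends e := by
      ext; simp
    simp [this]⟩⟩

end Multigraph

namespace Multigraph

/-- The invariant carried along a refinement: an injection of the original
vertices and a labelling of edges by original edges such that the fibre over
each original edge `e = s(x,y)` connects `ι x` to `ι y`. -/
def Good (G H : Multigraph) (ι : G.V → H.V) (σ : H.E → Option G.E) : Prop :=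
  Function.Injective ι ∧
  ∀ (e : G.E) (x y : G.V), G.ends e = s(x, y) →
    ∀ c : H.V → Prop, ¬(c (ι x) ↔ c (ι y)) →
      ∃ (f : H.E) (p q : H.V), σ f = some e ∧ H.ends f = s(p, q) ∧ ¬(c p ↔ c q)

lemma exists_good {G H : Multigraph} (h : IsRefinement G H) :
    ∃ (ι : G.V → H.V) (σ : H.E → Option G.E), Good G H ι σ := by
  induction h with
  | base hiso =>
    obtain ⟨θ⟩ := hiso
    refine ⟨θ.vmap, fun f => some (θ.emap.symm f), θ.vmap.injective, ?_⟩
    intro e x y hxy c hc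
    refine ⟨θ.emap e, θ.vmap x, θ.vmap y, by simp, ?_, hc⟩
    rw [θ.ends_map, hxy, Sym2.map_pair_eq]
  | @subdivide H e₀ xs ys hends hrec ih =>
    obtain ⟨ι, σ, hinj, hinv⟩ := ih
    refine ⟨fun g => Sum.inl (ι g),
      fun f => match f with
        | .inl f => σ f.1
        | .inr _ => σ e₀,
      fun a b hab => hinj (Sum.inl.inj hab), ?_⟩
    intro e x y hxy c hc
    obtain ⟨f, p, q, hσ, hfe, hcpq⟩ :=
      hinv e x y hxy (fun v => c (Sum.inl v)) hc
    by_cases hfe₀ : f = e₀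
    · subst hfe₀
      have hpq : s(p, q) = s(xs, ys) := by rw [← hfe, hends]
      have hxy' : ¬(c (Sum.inl xs) ↔ c (Sum.inl ys)) := by
        rcases Sym2.eq_iff.1 hpq with ⟨rfl, rfl⟩ | ⟨rfl, rfl⟩
        · exact hcpq
        · tauto
      by_cases hm : c (Sum.inl xs) ↔ c (Sum.inr ())
      · exact ⟨.inr true, Sum.inl ys, Sum.inr (), hσ, rfl, by tauto⟩
      · exact ⟨.inr false, Sum.inl xs, Sum.inr (), hσ, rfl, hm⟩
    · refine ⟨.inl ⟨f, hfe₀⟩, Sum.inl p, Sum.inl q, hσ, ?_, hcpq⟩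
      show (H.ends f).map Sum.inl = _
      rw [hfe, Sym2.map_pair_eq]
      rfl
  | @leaf H v hrec ih =>
    obtain ⟨ι, σ, hinj, hinv⟩ := ih
    refine ⟨fun g => Sum.inl (ι g),
      fun f => match f with
        | .inl f => σ f
        | .inr _ => none,
      fun a b hab => hinj (Sum.inl.inj hab), ?_⟩
    intro e x y hxy c hc
    obtain ⟨f, p, q, hσ, hfe, hcpq⟩ :=
      hinv e x y hxy (fun v => c (Sum.inl v)) hc
    refine ⟨.inl f, Sum.inl p, Sum.inl q, hσ, ?_, hcpq⟩
    show (H.ends f).map Sum.inl = _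
    rw [hfe, Sym2.map_pair_eq]
    rfl

end Multigraph

namespace Multigraph

lemma deleteEdges_ends (T : Multigraph) (S : Set T.E) (f : {e : T.E // e ∉ S}) :
    (T.deleteEdges S).ends f = T.ends f.1 := rfl

lemma reachable_delete_of_walk {T : Multigraph} (e' : T.E) {s u : T.V}
    (hee : T.ends e' = s(s, u)) {a b : T.V}
    (w : T.toSimpleGraph.Walk a b) (hs : ∀ v ∈ w.support, v ≠ s) :
    (T.deleteEdges {e'}).toSimpleGraph.Reachable a b := by
  induction w with
  | nil => exact SimpleGraph.Reachable.refl _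
  | @cons a c b h w' ih =>
    obtain ⟨hne, f, hf⟩ := toSimpleGraph_adj.1 h
    have hfe : f ≠ e' := by
      intro hcontra
      rw [hcontra, hee] at hf
      rcases Sym2.eq_iff.1 hf with ⟨h1, -⟩ | ⟨h2, -⟩
      · exact hs a (by simp) h1.symm
      · exact hs c (by simp) h2.symm
    have hends' : (T.deleteEdges {e'}).ends ⟨f, by simp [hfe]⟩ = s(a, c) := hf
    exact (adj_of_ends hends').reachable.trans
      (ih (fun v hv => hs v (by simp [hv])))

lemma card_delete_one {T : Multigraph} (e' : T.E) :
    Nat.card {e : T.E // e ∉ ({e'} : Set T.E)} = Nat.card T.E - 1 := by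
  classical
  haveI : Fintype T.E := Fintype.ofFinite _
  rw [Nat.card_congr (Equiv.subtypeEquivRight (q := fun e => ¬(e = e'))
    (by intro e; simp))]
  rw [Nat.card_eq_fintype_card, Nat.card_eq_fintype_card]
  rw [Fintype.card_subtype_compl (p := fun e => e = e'), Fintype.card_subtype_eq e']

lemma tree_bridge {T : Multigraph} (hT : T.IsTree) (e' : T.E) {x y : T.V}
    (hee : T.ends e' = s(x, y)) :
    ¬ (T.deleteEdges {e'}).toSimpleGraph.Reachable x y := by
  intro hR
  have hconn : (T.deleteEdges {e'}).Connected := by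
    rw [Connected, SimpleGraph.connected_iff]
    refine ⟨?_, hT.1.nonempty⟩
    intro a b
    obtain ⟨w⟩ := hT.1.preconnected a b
    induction w with
    | nil => exact SimpleGraph.Reachable.refl _
    | @cons a c b h w' ih =>
      obtain ⟨hne, f, hf⟩ := toSimpleGraph_adj.1 h
      by_cases hfe : f = e'
      · subst hfe
        rw [hee] at hf
        rcases Sym2.eq_iff.1 hf with ⟨rfl, rfl⟩ | ⟨rfl, rfl⟩
        · exact hR.trans ih
        · exact hR.symm.trans ih
      · have hends' : (T.deleteEdges {e'}).ends ⟨f, by simp [hfe]⟩ = s(a, c) := hf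
        exact (adj_of_ends hends').reachable.trans ih
  have h1 := card_le_of_connected hconn
  have h2 : Nat.card {e : T.E // e ∉ ({e'} : Set T.E)} = Nat.card T.E - 1 :=
    card_delete_one e'
  haveI : Nonempty T.E := ⟨e'⟩
  have h3 : 0 < Nat.card T.E := Nat.card_pos
  have h4 := hT.2
  rw [show (T.deleteEdges {e'}).E = {e : T.E // e ∉ ({e'} : Set T.E)} from rfl] at h1
  rw [show (T.deleteEdges {e'}).V = T.V from rfl] at h1
  omega

lemma tree_separation {T : Multigraph} (hT : T.IsTree) {s s' : T.V} (hss : s ≠ s') :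
    ∃ (e' : T.E) (c : T.V → Prop),
      ¬(c s ↔ c s') ∧ ∀ f : T.E, f ≠ e' → ∀ p q, T.ends f = s(p, q) → (c p ↔ c q) := by
  classical
  obtain ⟨w⟩ := hT.1.preconnected s s'
  have hp : w.bypass.IsPath := SimpleGraph.Walk.bypass_isPath w
  rcases hpath : w.bypass with _ | ⟨hadj, q⟩
  · exact absurd rfl hss
  · rw [hpath] at hp
    rw [SimpleGraph.Walk.cons_isPath_iff] at hp
    rename_i u₁
    obtain ⟨hne, e', hee⟩ := toSimpleGraph_adj.1 hadj
    refine ⟨e', fun v => (T.deleteEdges {e'}).toSimpleGraph.Reachable s v, ?_, ?_⟩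
    · intro hiff
      have hcs : (T.deleteEdges {e'}).toSimpleGraph.Reachable s s :=
        SimpleGraph.Reachable.refl _
      have hcs' := hiff.1 hcs
      have hq : (T.deleteEdges {e'}).toSimpleGraph.Reachable u₁ s' :=
        reachable_delete_of_walk e' hee q (fun v hv => by
          intro hcontra; subst hcontra; exact hp.2 hv)
      exact tree_bridge hT e' hee (hcs'.trans hq.symm)
    · intro f hfe p q hends
      have hends' : (T.deleteEdges {e'}).ends ⟨f, by simp [hfe]⟩ = s(p, q) := hends
      have hadj' := adj_of_ends hends'
      exact ⟨fun h => h.trans hadj'.reachable, fun h => h.trans hadj'.reachable.symm⟩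

end Multigraph

namespace Multigraph

lemma sgon_lower (d n : ℕ) (hd : 3 ≤ d) (hn : d ≤ n) (k : ℕ)
    (hk : ∃ (H T : Multigraph) (φ : GraphHom H T),
      IsRefinement (completeBipartite d n) H ∧ T.IsTree ∧ φ.Nonconstant ∧
      φ.IsHarmonic ∧ φ.HasDegree k) : d ≤ k := by
  classical
  obtain ⟨H, T, φ, href, hT, hnc, hharm, hdeg⟩ := hk
  obtain ⟨ι, σ, hinj, hinv⟩ := exists_good href
  have hdpos : 0 < d := by omega
  have hnpos : 0 < n := by omega
  -- every original vertex is incident to an edge of H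
  have hincident : ∀ w : (completeBipartite d n).V, ∃ f : H.E, ι w ∈ H.ends f := by
    intro w
    have key : ∃ (e : (completeBipartite d n).E) (x y : (completeBipartite d n).V),
        (completeBipartite d n).ends e = s(x, y) ∧ (x = w ∨ y = w) := by
      rcases w with i | j
      · exact ⟨(i, ⟨0, hnpos⟩), Sum.inl i, Sum.inr ⟨0, hnpos⟩, rfl, Or.inl rfl⟩
      · exact ⟨(⟨0, hdpos⟩, j), Sum.inl ⟨0, hdpos⟩, Sum.inr j, rfl, Or.inr rfl⟩
    obtain ⟨e, x, y, hxy, hw⟩ := key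
    have hxyne : x ≠ y := ne_of_ends hxy
    have hciff : ¬((fun v => v = ι w) (ι x) ↔ (fun v => v = ι w) (ι y)) := by
      simp only
      rcases hw with rfl | rfl
      · intro hiff
        exact hxyne (hinj (hiff.1 rfl)).symm
      · intro hiff
        exact hxyne (hinj (hiff.2 rfl))
    obtain ⟨f, p, q, hσ, hf, hc⟩ := hinv e x y hxy (fun v => v = ι w) hciff
    refine ⟨f, ?_⟩
    rw [hf, Sym2.mem_iff]
    by_cases hp : p = ι w
    · exact Or.inl hp.symm
    · by_cases hq : q = ι w
      · exact Or.inr hq.symm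
      · exact absurd (iff_of_false hp hq) hc
  by_cases hcase : ∀ w w' : (completeBipartite d n).V, φ.fV (ι w) = φ.fV (ι w')
  · -- all original vertices map to the same vertex t
    set w₀ : (completeBipartite d n).V := Sum.inl ⟨0, hdpos⟩ with hw₀
    set t := φ.fV (ι w₀) with ht
    have hconst : ∀ w, φ.fV (ι w) = t := fun w => hcase w w₀
    -- T has at least two vertices, hence an edge at t
    obtain ⟨v₀, v₁, hv01⟩ := hnc
    have hz : ∃ z : T.V, z ≠ t := by
      by_cases h : φ.fV v₀ = t
      · exact ⟨φ.fV v₁, by rw [← h]; exact fun hh => hv01 hh.symm⟩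
      · exact ⟨φ.fV v₀, h⟩
    obtain ⟨z, hz⟩ := hz
    obtain ⟨wlk⟩ := hT.1.preconnected t z
    have hedge : ∃ (e' : T.E) (u : T.V), T.ends e' = s(t, u) := by
      rcases wlk with _ | ⟨hadj, q⟩
      · exact absurd rfl hz
      · obtain ⟨-, e', hee⟩ := toSimpleGraph_adj.1 hadj
        exact ⟨e', _, hee⟩
    obtain ⟨e', u, hee⟩ := hedge
    have hte' : t ∈ T.ends e' := by rw [hee]; exact Sym2.mem_mk_left _ _
    -- every original vertex has an edge in the fibre over e'
    have hchoice : ∀ w : (completeBipartite d n).V,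
        ∃ g : H.E, ι w ∈ H.ends g ∧ φ.fE g = e' := by
      intro w
      obtain ⟨f, hf⟩ := hincident w
      have htf : φ.fV (ι w) ∈ T.ends (φ.fE f) := by
        rw [φ.ends_map]
        exact Sym2.mem_map.2 ⟨ι w, hf, rfl⟩
      have hte'' : φ.fV (ι w) ∈ T.ends e' := by rw [hconst w]; exact hte'
      have hcard := hharm (ι w) e' (φ.fE f) hte'' htf
      have hpos : 0 < Nat.card {g : H.E // ι w ∈ H.ends g ∧ φ.fE g = φ.fE f} := by
        haveI : Nonempty {g : H.E // ι w ∈ H.ends g ∧ φ.fE g = φ.fE f} :=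
          ⟨⟨f, hf, rfl⟩⟩
        exact Nat.card_pos
      rw [← hcard] at hpos
      have := Nat.card_pos_iff.1 hpos
      obtain ⟨⟨g, hg1, hg2⟩⟩ := this.1
      exact ⟨g, hg1, hg2⟩
    choose g hg1 hg2 using hchoice
    have hFinj : Function.Injective
        (fun w : (completeBipartite d n).V => (⟨g w, hg2 w⟩ : {f : H.E // φ.fE f = e'})) := by
      intro w w' heq
      by_contra hww
      have hgeq : g w = g w' := congrArg Subtype.val heq
      have hιne : ι w ≠ ι w' := fun hh => hww (hinj hh)
      have h1 := hg1 w
      have h2 := hg1 w'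
      rw [hgeq] at h1
      -- ends of g w' contains both ι w and ι w'
      obtain ⟨p, q, hpq⟩ := sym2_exists_rep (H.ends (g w'))
      rw [hpq, Sym2.mem_iff] at h1 h2
      have hpt : φ.fV p = t ∧ φ.fV q = t := by
        rcases h1 with rfl | rfl <;> rcases h2 with h2 | h2
        · exact absurd h2.symm hιne
        · exact ⟨hconst w, h2 ▸ hconst w'⟩
        · exact ⟨h2 ▸ hconst w', hconst w⟩
        · exact absurd h2 (by rw [← h2] at hιne; exact fun _ => hιne rfl)
      have hdiag : (T.ends (φ.fE (g w'))).IsDiag := by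
        rw [φ.ends_map, hpq, Sym2.map_pair_eq, hpt.1, hpt.2]
        exact Sym2.mk_isDiag_iff.2 rfl
      exact T.loopless _ hdiag
    have hcard1 : Nat.card (completeBipartite d n).V ≤
        Nat.card {f : H.E // φ.fE f = e'} :=
      Nat.card_le_card_of_injective _ hFinj
    have hcard2 : Nat.card (completeBipartite d n).V = d + n := by
      show Nat.card (Fin d ⊕ Fin n) = d + n
      simp [Nat.card_eq_fintype_card]
    rw [hcard2, hdeg e'] at hcard1
    omega
  · -- some two original vertices have different images
    push_neg at hcase
    obtain ⟨w₀, w₀', hne⟩ := hcase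
    obtain ⟨e', c, hcc, honly⟩ := tree_separation hT hne
    set col : (completeBipartite d n).V → Prop := fun w => c (φ.fV (ι w)) with hcol
    have hwit : ∀ (i : Fin d) (j : Fin n), ¬(col (Sum.inl i) ↔ col (Sum.inr j)) →
        ∃ f : {f : H.E // φ.fE f = e'}, σ f.1 = some (i, j) := by
      intro i j hij
      obtain ⟨f, p, q, hσ, hf, hcp⟩ := hinv (i, j) (Sum.inl i) (Sum.inr j) rfl
        (fun v => c (φ.fV v)) hij
      have hfe : φ.fE f = e' := by
        by_contra hcontra
        exact hcp (honly (φ.fE f) hcontra (φ.fV p) (φ.fV q)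
          (by rw [φ.ends_map, hf, Sym2.map_pair_eq]))
      exact ⟨⟨f, hfe⟩, hσ⟩
    have hnccol : ¬(col w₀ ↔ col w₀') := hcc
    by_cases hA : ∀ i : Fin d, ∃ j : Fin n, ¬(col (Sum.inl i) ↔ col (Sum.inr j))
    · choose jj hjj using hA
      choose F hF using fun i => hwit i (jj i) (hjj i)
      have hFinj : Function.Injective F := by
        intro i i' heq
        have := hF i
        rw [heq, hF i'] at this
        exact ((Prod.ext_iff.1 (Option.some.inj this)).1).symm
      have : Nat.card (Fin d) ≤ Nat.card {f : H.E // φ.fE f = e'} :=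
        Nat.card_le_card_of_injective _ hFinj
      rw [hdeg e', Nat.card_eq_fintype_card, Fintype.card_fin] at this
      exact this
    · push_neg at hA
      obtain ⟨i₀, hi₀⟩ := hA
      have hi₀' : ∀ j, (col (Sum.inl i₀) ↔ col (Sum.inr j)) := by
        intro j
        have := hi₀ j
        tauto
      have hex : ∃ i₁ : Fin d, ¬(col (Sum.inl i₁) ↔ col (Sum.inl i₀)) := by
        by_contra h
        push_neg at h
        have hall : ∀ w, (col w ↔ col (Sum.inl i₀)) := by
          rintro (i | j)
          · exact h i
          · exact (hi₀' j).symm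
        exact hnccol ((hall w₀).trans (hall w₀').symm)
      obtain ⟨i₁, hi₁⟩ := hex
      have hall : ∀ j : Fin n, ¬(col (Sum.inl i₁) ↔ col (Sum.inr j)) := by
        intro j h
        exact hi₁ (h.trans (hi₀' j).symm)
      choose F hF using fun j => hwit i₁ j (hall j)
      have hFinj : Function.Injective F := by
        intro j j' heq
        have := hF j
        rw [heq, hF j'] at this
        exact ((Prod.ext_iff.1 (Option.some.inj this)).2).symm
      have hcard : Nat.card (Fin n) ≤ Nat.card {f : H.E // φ.fE f = e'} :=
        Nat.card_le_card_of_injective _ hFinj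
      rw [hdeg e', Nat.card_eq_fintype_card, Fintype.card_fin] at hcard
      omega

end Multigraph

namespace Multigraph

/-- The star simple graph on `Option (Fin n)`, centre `none`. -/
def starSG (n : ℕ) : SimpleGraph (Option (Fin n)) where
  Adj a b := (a = none ∧ b ≠ none) ∨ (b = none ∧ a ≠ none)
  symm := by constructor; intro a b h; tauto
  loopless := by constructor; rintro a (⟨h1, h2⟩ | ⟨h1, h2⟩) <;> exact h2 h1

lemma starSG_connected (n : ℕ) : (starSG n).Connected := by
  rw [SimpleGraph.connected_iff]
  refine ⟨?_, ⟨none⟩⟩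
  have h : ∀ x : Option (Fin n), (starSG n).Reachable none x := by
    rintro (_ | j)
    · exact SimpleGraph.Reachable.refl _
    · exact (SimpleGraph.Adj.reachable (Or.inl ⟨rfl, by simp⟩))
  intro a b
  exact (h a).symm.trans (h b)

lemma starSG_acyclic (n : ℕ) : (starSG n).IsAcyclic := by
  rw [SimpleGraph.isAcyclic_iff_forall_edge_isBridge]
  intro e he
  obtain ⟨a, b, rfl⟩ := sym2_exists_rep e
  rw [SimpleGraph.mem_edgeSet] at he
  have aux : ∀ j : Fin n,
      ¬ ((starSG n) \ SimpleGraph.fromEdgeSet {s(none, some j)}).Reachable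
        none (some j) := by
    intro j h
    obtain ⟨w⟩ := h.symm
    cases w with
    | cons hadj q =>
      rename_i x
      rw [SimpleGraph.sdiff_adj] at hadj
      obtain ⟨hs, hns⟩ := hadj
      have hx : x = none := by
        rcases hs with ⟨h1, -⟩ | ⟨h1, -⟩
        · exact absurd h1 (Option.some_ne_none _)
        · exact h1
      apply hns
      rw [SimpleGraph.fromEdgeSet_adj, hx]
      refine ⟨?_, by simp⟩
      rw [Sym2.eq_swap]
      exact Set.mem_singleton _
  rcases he with ⟨rfl, hb⟩ | ⟨rfl, ha⟩
  · obtain ⟨j, rfl⟩ := Option.ne_none_iff_exists'.1 hb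
    rw [SimpleGraph.isBridge_iff]
    exact aux j
  · obtain ⟨j, rfl⟩ := Option.ne_none_iff_exists'.1 ha
    rw [show s(some j, (none : Option (Fin n))) = s(none, some j) from Sym2.eq_swap,
      SimpleGraph.isBridge_iff]
    exact aux j

lemma starSG_induce_connected (n : ℕ) (S : Set (Option (Fin n))) (h : none ∈ S) :
    (SimpleGraph.induce S (starSG n)).Connected := by
  rw [SimpleGraph.connected_iff]
  refine ⟨?_, ⟨⟨none, h⟩⟩⟩
  have key : ∀ x : S, (SimpleGraph.induce S (starSG n)).Reachable ⟨none, h⟩ x := by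
    rintro ⟨(_ | j), hx⟩
    · have : (⟨none, h⟩ : S) = ⟨none, hx⟩ := Subtype.ext rfl
      rw [← this]
    · refine SimpleGraph.Adj.reachable ?_
      show (starSG n).Adj none (some j)
      exact Or.inl ⟨rfl, by simp⟩
  intro a b
  exact (key a).symm.trans (key b)

lemma induce_connected_of_singleton {α : Type*} (G : SimpleGraph α) (S : Set α)
    (a : α) (ha : a ∈ S) (hS : ∀ x ∈ S, x = a) :
    (SimpleGraph.induce S G).Connected := by
  rw [SimpleGraph.connected_iff]
  refine ⟨?_, ⟨⟨a, ha⟩⟩⟩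
  rintro ⟨x, hx⟩ ⟨y, hy⟩
  have : (⟨x, hx⟩ : S) = ⟨y, hy⟩ := Subtype.ext ((hS x hx).trans (hS y hy).symm)
  rw [this]

/-- The star-shaped tree decomposition of `K_{d,n}` of width `d`. -/
noncomputable def bipartiteDecomp (d n : ℕ) :
    TreeDecomposition (completeBipartite d n) where
  idx := Option (Fin n)
  T := starSG n
  isTree := ⟨starSG_connected n, starSG_acyclic n⟩
  bag i := match i with
    | none => Set.range Sum.inl
    | some j => Set.range Sum.inl ∪ {Sum.inr j}
  covers_vertex v := by
    rcases v with i | j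
    · exact ⟨none, i, rfl⟩
    · exact ⟨some j, Or.inr rfl⟩
  covers_edge e := by
    refine ⟨some e.2, ?_⟩
    intro v hv
    rw [show (completeBipartite d n).ends e = s(Sum.inl e.1, Sum.inr e.2) from rfl,
      ] at hv
    rcases Sym2.mem_iff.1 hv with rfl | rfl
    · exact Or.inl ⟨e.1, rfl⟩
    · exact Or.inr rfl
  coherent v := by
    rcases v with i | j
    · exact starSG_induce_connected n _ ⟨i, rfl⟩
    · refine induce_connected_of_singleton _ _ (some j) (Or.inr rfl) ?_
      rintro (_ | j') hx
      · obtain ⟨a, ha⟩ := hx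
        exact absurd ha Sum.inl_ne_inr
      · rcases hx with ⟨a, ha⟩ | ha
        · exact absurd ha Sum.inl_ne_inr
        · exact congrArg some (Sum.inr.inj ha).symm

lemma bipartite_treewidthLE (d n : ℕ) : (completeBipartite d n).TreewidthLE d := by
  classical
  refine ⟨bipartiteDecomp d n, ?_⟩
  rintro (_ | j)
  · have : Nat.card ((bipartiteDecomp d n).bag none) = d := by
      show Nat.card (Set.range (Sum.inl : Fin d → (completeBipartite d n).V)) = d
      rw [Nat.card_congr (Equiv.ofInjective _ Sum.inl_injective).symm,
        Nat.card_eq_fintype_card, Fintype.card_fin]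
    omega
  · have hinj : Function.Injective
        (fun x : ((bipartiteDecomp d n).bag (some j)) =>
          (match x.1 with
            | Sum.inl a => some a
            | Sum.inr _ => (none : Option (Fin d)))) := by
      rintro ⟨(a | a), ha⟩ ⟨(b | b), hb⟩ hab
      · simp only [Option.some.injEq] at hab
        exact Subtype.ext (congrArg Sum.inl hab)
      · exact absurd hab (Option.some_ne_none _)
      · exact absurd hab (Option.some_ne_none _).symm
      · have h1 : a = j := by
          rcases ha with ⟨c, hc⟩ | ha
          · exact absurd hc Sum.inl_ne_inr
          · exact Sum.inr.inj ha
        have h2 : b = j := by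
          rcases hb with ⟨c, hc⟩ | hb
          · exact absurd hc Sum.inl_ne_inr
          · exact Sum.inr.inj hb
        exact Subtype.ext (show Sum.inr a = Sum.inr b by rw [h1, h2])
    have := Nat.card_le_card_of_injective _ hinj
    have hcard : Nat.card (Option (Fin d)) = d + 1 := by
      simp [Nat.card_eq_fintype_card]
    omega

end Multigraph

section TreeLemmas

open SimpleGraph

variable {ι : Type*} {T : SimpleGraph ι}

lemma isPath_append_of_inter {a b c : ι} {p : T.Walk a b} {q : T.Walk b c}
    (hp : p.IsPath) (hq : q.IsPath)
    (h : ∀ x ∈ p.support, x ∈ q.support → x = b) : (p.append q).IsPath := by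
  rw [SimpleGraph.Walk.isPath_def] at hp hq ⊢
  rw [SimpleGraph.Walk.support_append]
  refine List.Nodup.append hp (by rw [q.support_eq_cons] at hq; exact hq.of_cons) ?_
  intro x hxp hxq
  have hxq' : x ∈ q.support := by
    rw [q.support_eq_cons]
    exact List.mem_cons_of_mem _ hxq
  have hxb : x = b := h x hxp hxq'
  subst hxb
  have : ¬ x ∈ q.support.tail := by
    rw [q.support_eq_cons] at hq
    exact (List.nodup_cons.1 hq).1
  exact this hxq

/-- Along a walk ending in `S`, there is a first vertex of `S`. -/
lemma walk_first_in_set (S : Set ι) {z x : ι} (w : T.Walk z x) :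
    x ∈ S → w.IsPath →
    ∃ (m : ι) (_ : m ∈ S) (q : T.Walk z m), q.IsPath ∧
      (∀ a ∈ q.support, a ∈ w.support) ∧ (∀ a ∈ q.support, a ∈ S → a = m) := by
  induction w with
  | nil =>
    intro hx _
    exact ⟨_, hx, SimpleGraph.Walk.nil, SimpleGraph.Walk.IsPath.nil, by simp,
      fun a ha _ => by simpa using ha⟩
  | @cons z c x h w' ih =>
    intro hx hw
    by_cases hz : z ∈ S
    · exact ⟨z, hz, SimpleGraph.Walk.nil, SimpleGraph.Walk.IsPath.nil, by simp,
        fun a ha _ => by simpa using ha⟩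
    · obtain ⟨m, hm, q, hq, hsub, hmin⟩ := ih hx hw.of_cons
      refine ⟨m, hm, .cons h q, ?_, ?_, ?_⟩
      · rw [SimpleGraph.Walk.cons_isPath_iff]
        refine ⟨hq, fun hcon => ?_⟩
        exact ((SimpleGraph.Walk.cons_isPath_iff _ _).1 hw).2 (hsub z hcon)
      · intro a ha
        rw [SimpleGraph.Walk.support_cons] at ha ⊢
        rcases List.mem_cons.1 ha with rfl | ha
        · exact List.mem_cons_self
        · exact List.mem_cons_of_mem _ (hsub a ha)
      · intro a ha haS
        rw [SimpleGraph.Walk.support_cons] at ha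
        rcases List.mem_cons.1 ha with rfl | ha
        · exact absurd haS hz
        · exact hmin a ha haS

/-- Median of three vertices in a connected graph. -/
lemma exists_median (hconn : T.Connected) (x y z : ι) :
    ∃ (m : ι) (pxy : T.Walk x y) (pzy : T.Walk z y) (pzx : T.Walk z x),
      pxy.IsPath ∧ pzy.IsPath ∧ pzx.IsPath ∧
      m ∈ pxy.support ∧ m ∈ pzy.support ∧ m ∈ pzx.support := by
  classical
  obtain ⟨wxy⟩ := hconn.preconnected x y
  obtain ⟨wzx⟩ := hconn.preconnected z x
  set pxy := wxy.bypass with hpxy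
  have hpxyP : pxy.IsPath := wxy.bypass_isPath
  set pzx := wzx.bypass with hpzx
  have hpzxP : pzx.IsPath := wzx.bypass_isPath
  obtain ⟨m, hm, q, hqP, hsub, hmin⟩ :=
    walk_first_in_set {a | a ∈ pxy.support} pzx
      (by simp [SimpleGraph.Walk.end_mem_support]) hpzxP
  have hr : (pxy.dropUntil m hm).IsPath := hpxyP.dropUntil hm
  have happ : (q.append (pxy.dropUntil m hm)).IsPath := by
    refine isPath_append_of_inter hqP hr ?_
    intro a ha ha'
    exact hmin a ha (SimpleGraph.Walk.support_dropUntil_subset _ hm ha')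
  refine ⟨m, pxy, q.append (pxy.dropUntil m hm), pzx, hpxyP, happ, hpzxP, hm, ?_, ?_⟩
  · rw [SimpleGraph.Walk.support_append]
    exact List.mem_append_left _ (SimpleGraph.Walk.end_mem_support q)
  · exact hsub m (SimpleGraph.Walk.end_mem_support q)

/-- Path-closed subsets of a graph. -/
def TClosed (T : SimpleGraph ι) (S : Set ι) : Prop :=
  ∀ ⦃x y : ι⦄, x ∈ S → y ∈ S → ∀ w : T.Walk x y, w.IsPath → ∀ j ∈ w.support, j ∈ S

lemma TClosed.inter {S S' : Set ι} (h : TClosed T S) (h' : TClosed T S') :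
    TClosed T (S ∩ S') :=
  fun _ _ hx hy w hw j hj =>
    ⟨h hx.1 hy.1 w hw j hj, h' hx.2 hy.2 w hw j hj⟩

lemma helly3 (hconn : T.Connected) {A B C : Set ι}
    (hA : TClosed T A) (hB : TClosed T B) (hC : TClosed T C)
    (hAB : (A ∩ B).Nonempty) (hAC : (A ∩ C).Nonempty) (hBC : (B ∩ C).Nonempty) :
    (A ∩ B ∩ C).Nonempty := by
  obtain ⟨x, hxA, hxB⟩ := hAB
  obtain ⟨y, hyA, hyC⟩ := hAC
  obtain ⟨z, hzB, hzC⟩ := hBC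
  obtain ⟨m, pxy, pzy, pzx, h1, h2, h3, m1, m2, m3⟩ := exists_median hconn x y z
  exact ⟨m, ⟨hA hxA hyA pxy h1 m m1, hB hzB hxB pzx h3 m m3⟩,
    hC hzC hyC pzy h2 m m2⟩

lemma helly_finset {κ : Type*} [DecidableEq κ] (hconn : T.Connected) (s : Finset κ) :
    ∀ A : κ → Set ι, (∀ k ∈ s, TClosed T (A k)) →
    (∀ k ∈ s, ∀ k' ∈ s, (A k ∩ A k').Nonempty) → s.Nonempty →
    ∃ p, ∀ k ∈ s, p ∈ A k := by
  induction s using Finset.induction_on with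
  | empty => rintro A - - ⟨k, hk⟩; exact absurd hk (by simp)
  | @insert a s ha ih =>
    intro A hclosed hpair _hne
    rcases s.eq_empty_or_nonempty with rfl | hs
    · obtain ⟨p, hp, -⟩ := hpair a (by simp) a (by simp)
      refine ⟨p, ?_⟩
      intro k hk
      rcases Finset.mem_insert.1 hk with rfl | hk
      · exact hp
      · exact absurd hk (by simp)
    · obtain ⟨p, hp⟩ := ih (fun k => A k ∩ A a)
        (fun k hk => (hclosed k (Finset.mem_insert_of_mem hk)).inter
          (hclosed a (Finset.mem_insert_self a s)))
        (fun k hk k' hk' => by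
          have h3 := helly3 hconn
            (hclosed k (Finset.mem_insert_of_mem hk))
            (hclosed k' (Finset.mem_insert_of_mem hk'))
            (hclosed a (Finset.mem_insert_self a s))
            (hpair k (Finset.mem_insert_of_mem hk) k' (Finset.mem_insert_of_mem hk'))
            (hpair k (Finset.mem_insert_of_mem hk) a (Finset.mem_insert_self a s))
            (hpair k' (Finset.mem_insert_of_mem hk') a (Finset.mem_insert_self a s))
          obtain ⟨p, ⟨h1, h2⟩, h3'⟩ := h3
          exact ⟨p, ⟨h1, h3'⟩, ⟨h2, h3'⟩⟩) hs
      refine ⟨p, ?_⟩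
      intro k hk
      rcases Finset.mem_insert.1 hk with rfl | hk
      · obtain ⟨k₀, hk₀⟩ := hs
        exact (hp k₀ hk₀).2
      · exact (hp k hk).1

lemma reachable_delete_of_avoid {u u' a b : ι}
    (w : T.Walk a b) (h : u' ∉ w.support ∨ u ∉ w.support) :
    (T.deleteEdges {s(u, u')}).Reachable a b := by
  refine ⟨w.toDeleteEdges _ ?_⟩
  intro e he
  simp only [Set.mem_singleton_iff]
  intro heq
  subst heq
  rcases h with h | h
  · exact h (SimpleGraph.Walk.snd_mem_support_of_mem_edges w he)
  · exact h (SimpleGraph.Walk.fst_mem_support_of_mem_edges w he)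

/-- The first exit edge of a path leaving a set. -/
lemma exit_edge (S : Set ι) {x y : ι} (w : T.Walk x y) :
    w.IsPath → x ∈ S → y ∉ S →
    ∃ u u', T.Adj u u' ∧ u ∈ S ∧ u' ∉ S ∧
      (T.deleteEdges {s(u, u')}).Reachable u' y := by
  induction w with
  | nil => intro _ hx hy; exact absurd hx hy
  | @cons x c y h w' ih =>
    intro hw hx hy
    by_cases hc : c ∈ S
    · exact ih hw.of_cons hc hy
    · refine ⟨x, c, h, hx, hc, ?_⟩
      refine reachable_delete_of_avoid w' (Or.inr ?_)
      exact ((SimpleGraph.Walk.cons_isPath_iff _ _).1 hw).2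

end TreeLemmas

namespace Multigraph

open SimpleGraph

variable {K : Multigraph}

/-- The set of bags containing a given vertex. -/
def Ibag (D : TreeDecomposition K) (v : K.V) : Set D.idx := {i | v ∈ D.bag i}

lemma exists_walk_in_Ibag (D : TreeDecomposition K) (v : K.V) {a b : D.idx}
    (ha : a ∈ Ibag D v) (hb : b ∈ Ibag D v) :
    ∃ w : D.T.Walk a b, ∀ x ∈ w.support, x ∈ Ibag D v := by
  classical
  obtain ⟨W⟩ := (D.coherent v).preconnected ⟨a, ha⟩ ⟨b, hb⟩
  refine ⟨W.map (SimpleGraph.Embedding.induce {i | v ∈ D.bag i}).toHom, ?_⟩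
  intro x hx
  replace hx := Eq.mp (congrArg (x ∈ ·) (SimpleGraph.Walk.support_map _ W)) hx
  obtain ⟨⟨x', hx'⟩, -, rfl⟩ := List.mem_map.1 hx
  exact hx'

lemma closed_Ibag (D : TreeDecomposition K) (v : K.V) : TClosed D.T (Ibag D v) := by
  classical
  intro x y hx hy w hw j hj
  obtain ⟨W', hW'⟩ := exists_walk_in_Ibag D v hx hy
  have hb : W'.bypass.IsPath := W'.bypass_isPath
  have heq : w = W'.bypass := by
    have := D.isTree.IsAcyclic.path_unique ⟨w, hw⟩ ⟨W'.bypass, hb⟩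
    exact congrArg Subtype.val this
  rw [heq] at hj
  exact hW' j (SimpleGraph.Walk.support_bypass_subset _ hj)

lemma bipartite_tw_lower (d n : ℕ) (hd : 3 ≤ d) (hn : d ≤ n) (k : ℕ)
    (h : (completeBipartite d n).TreewidthLE k) : d ≤ k := by
  classical
  obtain ⟨D, hD⟩ := h
  have hT := D.isTree
  have hconn : D.T.Connected := hT.isConnected
  have hd1 : 0 < d := by omega
  have hn1 : 0 < n := by omega
  have hvert : ∀ v, (Ibag D v).Nonempty := fun v => D.covers_vertex v
  have hedge : ∀ (i : Fin d) (j : Fin n),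
      (Ibag D (Sum.inl i) ∩ Ibag D (Sum.inr j)).Nonempty := by
    intro i j
    obtain ⟨b, hb⟩ := D.covers_edge (i, j)
    refine ⟨b, hb _ ?_, hb _ ?_⟩
    · exact Sym2.mem_mk_left _ _
    · exact Sym2.mem_mk_right _ _
  by_cases hcase : ∀ i i' : Fin d,
      (Ibag D (Sum.inl i) ∩ Ibag D (Sum.inl i')).Nonempty
  · -- all the left subtrees pairwise meet: use the Helly property
    set A : Option (Fin d) → Set D.idx := fun o => match o with
      | none => Ibag D (Sum.inr ⟨0, hn1⟩)
      | some i => Ibag D (Sum.inl i) with hA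
    obtain ⟨p, hp⟩ := helly_finset hconn (Finset.univ : Finset (Option (Fin d))) A
      (by rintro (_ | i) - <;> exact closed_Ibag D _)
      (by
        rintro (_ | i) - (_ | i') -
        · obtain ⟨x, hx⟩ := hvert (Sum.inr ⟨0, hn1⟩)
          exact ⟨x, hx, hx⟩
        · obtain ⟨b, h1, h2⟩ := hedge i' ⟨0, hn1⟩
          exact ⟨b, h2, h1⟩
        · exact hedge i ⟨0, hn1⟩
        · exact hcase i i')
      ⟨none, Finset.mem_univ _⟩
    have hinj : Function.Injective (fun o : Option (Fin d) =>
        (⟨match o with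
          | none => Sum.inr ⟨0, hn1⟩
          | some i => Sum.inl i, by
            rcases o with _ | i
            · exact hp none (Finset.mem_univ _)
            · exact hp (some i) (Finset.mem_univ _)⟩ : D.bag p)) := by
      rintro (_ | a) (_ | b) hab
      · rfl
      · exact absurd (congrArg Subtype.val hab) Sum.inr_ne_inl
      · exact absurd (congrArg Subtype.val hab) Sum.inl_ne_inr
      · exact congrArg some (Sum.inl.inj (congrArg Subtype.val hab))
    have hle : Nat.card (Option (Fin d)) ≤ Nat.card (D.bag p) :=
      Nat.card_le_card_of_injective _ hinj
    have hcard : Nat.card (Option (Fin d)) = d + 1 := by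
      simp [Nat.card_eq_fintype_card]
    have := hD p
    omega
  · -- two disjoint left subtrees: find the separating edge
    simp only [not_forall] at hcase
    obtain ⟨i, i', hdisj⟩ := hcase
    rw [Set.not_nonempty_iff_eq_empty] at hdisj
    obtain ⟨x₀, hx₀⟩ := hvert (Sum.inl i)
    obtain ⟨y₀, hy₀⟩ := hvert (Sum.inl i')
    have hy₀' : y₀ ∉ Ibag D (Sum.inl i) := fun hc =>
      Set.eq_empty_iff_forall_notMem.1 hdisj y₀ ⟨hc, hy₀⟩
    obtain ⟨w0⟩ := hconn.preconnected x₀ y₀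
    obtain ⟨u, u', hadj, huS, hu'S, hreach⟩ :=
      exit_edge (Ibag D (Sum.inl i)) w0.bypass w0.bypass_isPath hx₀ hy₀'
    have hbr : ¬ (D.T.deleteEdges {s(u, u')}).Reachable u u' := by
      have hb := (SimpleGraph.isAcyclic_iff_forall_edge_isBridge.1 hT.IsAcyclic)
        ((SimpleGraph.mem_edgeSet _).2 hadj)
      rw [SimpleGraph.isBridge_iff] at hb
      exact hb
    have huS2 : u ∉ Ibag D (Sum.inl i') := fun hc =>
      Set.eq_empty_iff_forall_notMem.1 hdisj u ⟨huS, hc⟩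
    have hkey : ∀ j : Fin n, u ∈ Ibag D (Sum.inr j) ∧ u' ∈ Ibag D (Sum.inr j) := by
      intro j
      obtain ⟨aj, ha1, ha2⟩ := hedge i j
      obtain ⟨bj, hb1, hb2⟩ := hedge i' j
      obtain ⟨w, hwsupp⟩ := exists_walk_in_Ibag D (Sum.inr j) ha2 hb2
      by_cases huse : s(u, u') ∈ w.edges
      · exact ⟨hwsupp u (SimpleGraph.Walk.fst_mem_support_of_mem_edges w huse),
          hwsupp u' (SimpleGraph.Walk.snd_mem_support_of_mem_edges w huse)⟩
      · exfalso
        have h1 : (D.T.deleteEdges {s(u, u')}).Reachable aj bj :=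
          ⟨w.toDeleteEdges _ (fun e he => by
            simp only [Set.mem_singleton_iff]
            intro hcontra
            subst hcontra
            exact huse he)⟩
        obtain ⟨wa, hwa⟩ := exists_walk_in_Ibag D (Sum.inl i) ha1 huS
        have h2 : (D.T.deleteEdges {s(u, u')}).Reachable aj u :=
          reachable_delete_of_avoid wa (Or.inl (fun hc => hu'S (hwa u' hc)))
        obtain ⟨wb, hwb⟩ := exists_walk_in_Ibag D (Sum.inl i') hb1 hy₀
        have h3 : (D.T.deleteEdges {s(u, u')}).Reachable bj y₀ :=
          reachable_delete_of_avoid wb (Or.inr (fun hc => huS2 (hwb u hc)))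
        exact hbr (h2.symm.trans (h1.trans (h3.trans hreach.symm)))
    have hinj : Function.Injective (fun o : Option (Fin n) =>
        (⟨match o with
          | none => Sum.inl i
          | some j => Sum.inr j, by
            rcases o with _ | j
            · exact huS
            · exact (hkey j).1⟩ : D.bag u)) := by
      rintro (_ | a) (_ | b) hab
      · rfl
      · exact absurd (congrArg Subtype.val hab) Sum.inl_ne_inr
      · exact absurd (congrArg Subtype.val hab) Sum.inr_ne_inl
      · exact congrArg some (Sum.inr.inj (congrArg Subtype.val hab))
    have hle : Nat.card (Option (Fin n)) ≤ Nat.card (D.bag u) :=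
      Nat.card_le_card_of_injective _ hinj
    have hcard : Nat.card (Option (Fin n)) = n + 1 := by
      simp [Nat.card_eq_fintype_card]
    have := hD u
    omega

end Multigraph

open Multigraph in
/-- For `3 ≤ d ≤ n` the complete bipartite graph `K_{d,n}` has
stable gonality exactly `d`; there is a degree-`d` harmonic morphism from
`K_{d,n}` itself to a tree, the treewidth of `K_{d,n}` is `d`, and the
treewidth is a lower bound for its stable gonality. -/
theorem completeBipartite_stable_gonality (d n : ℕ) (hd : 3 ≤ d) (hn : d ≤ n) :
    (completeBipartite d n).stableGonality = d ∧
    (∃ (T : Multigraph) (φ : GraphHom (completeBipartite d n) T),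
      T.IsTree ∧ φ.Nonconstant ∧ φ.IsHarmonic ∧ φ.HasDegree d) ∧
    (completeBipartite d n).treewidth = d ∧
    (completeBipartite d n).treewidth ≤ (completeBipartite d n).stableGonality := by
  have hd0 : 0 < d := by omega
  have hn0 : 0 < n := by omega
  have hmem : d ∈ {d' : ℕ | ∃ (H T : Multigraph) (φ : GraphHom H T),
      IsRefinement (completeBipartite d n) H ∧ T.IsTree ∧ φ.Nonconstant ∧
      φ.IsHarmonic ∧ φ.HasDegree d'} :=
    ⟨completeBipartite d n, starTree n, bipartiteToStar d n,
      isRefinement_self _, starTree_isTree n,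
      bipartiteToStar_nonconstant d n hd0 hn0, bipartiteToStar_harmonic d n,
      bipartiteToStar_degree d n⟩
  have hsgon : (completeBipartite d n).stableGonality = d := by
    refine le_antisymm (Nat.sInf_le hmem) (le_csInf ⟨d, hmem⟩ ?_)
    intro k hk
    exact sgon_lower d n hd hn k hk
  have htwmem : d ∈ {k : ℕ | (completeBipartite d n).TreewidthLE k} :=
    bipartite_treewidthLE d n
  have htw : (completeBipartite d n).treewidth = d := by
    refine le_antisymm (Nat.sInf_le htwmem) (le_csInf ⟨d, htwmem⟩ ?_)
    intro k hk
    exact bipartite_tw_lower d n hd hn k hk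
  exact ⟨hsgon, ⟨starTree n, bipartiteToStar d n, starTree_isTree n,
    bipartiteToStar_nonconstant d n hd0 hn0, bipartiteToStar_harmonic d n,
    bipartiteToStar_degree d n⟩, htw, by rw [hsgon, htw]⟩
end

section
/- Let G be a 2-edge-connected loopless connected graph of genus at least 3, and let α be a mixing involution on G such that the quotient G/α has genus one. Let ē be an edge of G/α such that G/α with ē deleted is a tree, and let e and e′ = α(e) be the two preimage edges of ē in G. Then the graph G₀ = G − {e, e′} is connected; moreover the involution α₀ induced by α on G₀ is a mixing involution whose quotient G₀/α₀ = (G/α) − ē is a tree, so G₀ is hyperelliptic. -/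
namespace Multigraph
namespace MixingInvolution
variable {G : Multigraph} (α : MixingInvolution G)

theorem exchanged_of_emap_eq {f : G.E} (h : α.emap f = f) : α.Exchanged f := by
  obtain ⟨x, y, hxy⟩ := sym2_exists_rep (G.ends f)
  exact ⟨x, y, hxy, α.mixing f x y hxy h⟩

theorem exchanged_emap {f : G.E} (h : α.Exchanged f) : α.Exchanged (α.emap f) := by
  obtain ⟨x, y, hxy, hv⟩ := h
  refine ⟨α.vmap x, α.vmap y, ?_, ?_⟩
  · rw [α.ends_map, hxy, Sym2.map_pair_eq]
  · rw [α.vmap_invol, ← hv, α.vmap_invol]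

theorem exchanged_emap_iff {f : G.E} : α.Exchanged (α.emap f) ↔ α.Exchanged f :=
  ⟨fun h => by have := α.exchanged_emap h; rwa [α.emap_invol] at this, α.exchanged_emap⟩

theorem emap_ne {f : G.E} (h : ¬ α.Exchanged f) : α.emap f ≠ f :=
  fun hf => h (α.exchanged_of_emap_eq hf)

/-- The underlying function of the induced involution on edges. -/
def delEmapFun (e : G.E) (f : (G.deleteEdges {e, α.emap e}).E) :
    (G.deleteEdges {e, α.emap e}).E :=
  ⟨α.emap f.1, by
    intro h
    rcases h with h | h
    · refine f.2 (Or.inr ?_)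
      exact α.emap.injective (by rw [α.emap_invol]; exact h)
    · exact f.2 (Or.inl (α.emap.injective (h : α.emap f.1 = α.emap e)))⟩

theorem delEmapFun_invol (e : G.E) : Function.Involutive (α.delEmapFun e) :=
  fun f => Subtype.ext (α.emap_invol f.1)

/-- The mixing involution induced on `G - {e, α e}`. -/
noncomputable def delInvol (hG : G.Connected) (hg : 3 ≤ G.eulerGenus) (e : G.E) :
    MixingInvolution (G.deleteEdges {e, α.emap e}) where
  vmap := α.vmap
  emap := (α.delEmapFun_invol e).toPerm
  ends_map f := α.ends_map f.1
  vmap_invol := α.vmap_invol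
  emap_invol f := Subtype.ext (α.emap_invol f.1)
  nontrivial := by
    rintro ⟨hv, hfix⟩
    classical
    have hall : ∀ f : G.E, f = e ∨ f = α.emap e := by
      intro f
      by_contra hf
      push_neg at hf
      have hmem : f ∉ ({e, α.emap e} : Set G.E) := by
        rintro (h | h)
        exacts [hf.1 h, hf.2 h]
      have h1 := congrArg Subtype.val (hfix ⟨f, hmem⟩)
      have h2 : α.emap f = f := h1
      obtain ⟨x, y, hxy⟩ := sym2_exists_rep (G.ends f)
      have h3 := α.mixing f x y hxy h2
      have h4 : α.vmap x = x := hv x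
      rw [h4] at h3
      exact G.loopless f (by rw [hxy, Sym2.mk_isDiag_iff]; exact h3)
    have hcard : Nat.card G.E ≤ 2 := by
      have hinj : Function.Injective (fun f : G.E => (f = α.emap e : Bool)) := by
        intro f g hfg
        by_cases h1 : f = α.emap e <;> by_cases h2 : g = α.emap e <;>
          simp [h1, h2] at hfg ⊢
        · rcases hall f with h | h
          · rcases hall g with h' | h'
            · rw [h, h']
            · exact absurd h' h2
          · exact absurd h h1
      calc Nat.card G.E ≤ Nat.card Bool := Nat.card_le_card_of_injective _ hinj
        _ = 2 := by simp
    have : Nonempty G.V := hG.nonempty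
    have hV : 0 < Nat.card G.V := Nat.card_pos
    unfold eulerGenus at hg
    omega
  mixing f x y hends hfix := α.mixing f.1 x y hends (congrArg Subtype.val hfix)

end MixingInvolution
end Multigraph

namespace Multigraph

/-- A multigraph isomorphism induces an isomorphism of underlying simple graphs. -/
def Iso.toSimpleGraphIso {G H : Multigraph} (φ : Iso G H) :
    G.toSimpleGraph ≃g H.toSimpleGraph where
  toEquiv := φ.vmap
  map_rel_iff' := by
    intro a b
    have key : ∀ x y : G.V,
        (∃ f, H.ends f = s(φ.vmap x, φ.vmap y)) ↔ ∃ g, G.ends g = s(x, y) := by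
      intro x y
      constructor
      · rintro ⟨f, hf⟩
        refine ⟨φ.emap.symm f, ?_⟩
        have h2 := φ.ends_map (φ.emap.symm f)
        rw [Equiv.apply_symm_apply, hf] at h2
        have : s(φ.vmap x, φ.vmap y) = (s(x, y) : Sym2 G.V).map φ.vmap := by
          rw [Sym2.map_pair_eq]
        rw [this] at h2
        exact Sym2.map.injective φ.vmap.injective h2.symm
      · rintro ⟨g, hg⟩
        exact ⟨φ.emap g, by rw [φ.ends_map, hg, Sym2.map_pair_eq]⟩
    simp only [toSimpleGraph, SimpleGraph.fromRel_adj]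
    rw [key, key]
    constructor
    · rintro ⟨hne, h⟩
      exact ⟨fun hxy => hne (congrArg φ.vmap hxy), h⟩
    · rintro ⟨hne, h⟩
      exact ⟨fun hxy => hne (φ.vmap.injective hxy), h⟩

theorem Iso.connected {G H : Multigraph} (φ : Iso G H) (hG : G.Connected) :
    H.Connected :=
  hG.map φ.toSimpleGraphIso.toHom φ.toSimpleGraphIso.toEquiv.surjective

theorem Iso.isTree_of {G H : Multigraph} (φ : Iso G H) (hH : H.IsTree) : G.IsTree := by
  refine ⟨hH.1.map φ.toSimpleGraphIso.symm.toHom φ.toSimpleGraphIso.symm.toEquiv.surjective, ?_⟩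
  rw [Nat.card_congr φ.emap, Nat.card_congr φ.vmap]
  exact hH.2

end Multigraph

namespace Multigraph
namespace MixingInvolution

variable {G : Multigraph} (α : MixingInvolution G)

theorem exchanged_delInvol_iff (hG : G.Connected) (hg : 3 ≤ G.eulerGenus) (e : G.E)
    (f : (G.deleteEdges {e, α.emap e}).E) :
    (α.delInvol hG hg e).Exchanged f ↔ α.Exchanged f.1 := Iff.rfl

/-- The quotient of the restricted involution is isomorphic to the quotient
with the image edge deleted. -/
noncomputable def delInvolQuotientIso (hG : G.Connected) (hg : 3 ≤ G.eulerGenus)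
    (e : G.E) (he : ¬ α.Exchanged e) :
    Iso (α.delInvol hG hg e).quotient
      (α.quotient.deleteEdges {Quotient.mk α.eSetoid ⟨e, he⟩}) := by
  set ι := α.delInvol hG hg e with hι
  -- the vertex equivalence
  refine
    { vmap := Quotient.congrRight (fun a b => Iff.rfl)
      emap := ?_
      ends_map := ?_ }
  · -- edge equivalence
    refine Equiv.ofBijective (Quotient.lift (fun a =>
      (⟨Quotient.mk α.eSetoid ⟨a.1.1, a.2⟩, ?_⟩ :
        (α.quotient.deleteEdges {Quotient.mk α.eSetoid ⟨e, he⟩}).E)) ?_) ⟨?_, ?_⟩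
    · -- not the deleted edge class
      intro hmem
      have hq : Quotient.mk α.eSetoid ⟨a.1.1, a.2⟩ = Quotient.mk α.eSetoid ⟨e, he⟩ := hmem
      have hr := Quotient.exact hq
      rcases hr with h | h
      · exact a.1.2 (Or.inl h.symm)
      · exact a.1.2 (Or.inr (α.emap.injective
          ((h.symm).trans (α.emap_invol e).symm)))
    · -- well-defined
      rintro a b (h | h)
      · refine Subtype.ext (Quotient.sound (Or.inl ?_))
        show b.1.1 = a.1.1
        exact congrArg Subtype.val h
      · refine Subtype.ext (Quotient.sound (Or.inr ?_))
        show b.1.1 = α.emap a.1.1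
        exact congrArg Subtype.val h
    · -- injective
      refine Quotient.ind (fun a => Quotient.ind (fun b => ?_))
      intro hab
      have hq : Quotient.mk α.eSetoid ⟨a.1.1, a.2⟩ = Quotient.mk α.eSetoid ⟨b.1.1, b.2⟩ :=
        congrArg Subtype.val hab
      refine Quotient.sound ?_
      rcases Quotient.exact hq with h | h
      · exact Or.inl (Subtype.ext h)
      · exact Or.inr (Subtype.ext h)
    · -- surjective
      rintro ⟨q, hq⟩
      induction q using Quotient.ind with
      | _ g =>
        have hmem : g.1 ∉ ({e, α.emap e} : Set G.E) := by
          rintro (h | h)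
          · exact hq (show Quotient.mk α.eSetoid g ∈ _ from by
              have : g = ⟨e, he⟩ := Subtype.ext h
              rw [this]; rfl)
          · refine hq (show Quotient.mk α.eSetoid g ∈ _ from
              Quotient.sound (Or.inr ?_))
            have h' : g.1 = α.emap e := h
            rw [h', α.emap_invol]
        refine ⟨Quotient.mk _ ⟨⟨g.1, hmem⟩, g.2⟩, ?_⟩
        refine Subtype.ext ?_
        show Quotient.mk α.eSetoid _ = Quotient.mk α.eSetoid g
        exact congrArg _ (Subtype.ext rfl)
  · -- ends_map
    refine Quotient.ind (fun a => ?_)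
    obtain ⟨x, y, hxy⟩ := sym2_exists_rep (G.ends a.1.1)
    show (G.ends a.1.1).map (fun v => Quotient.mk α.vSetoid v)
      = (((G.deleteEdges {e, α.emap e}).ends a.1).map
          (fun v => Quotient.mk ι.vSetoid v)).map _
    show (G.ends a.1.1).map (fun v => Quotient.mk α.vSetoid v)
      = ((G.ends a.1.1).map (fun v => Quotient.mk ι.vSetoid v)).map _
    rw [hxy, Sym2.map_pair_eq]
    rfl
end MixingInvolution
end Multigraph

open Function in
theorem two_mul_card_quotient {A : Type} [Finite A] (s : Setoid A) (f : A → A)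
    (hrel : ∀ a b, s.r a b ↔ (b = a ∨ b = f a))
    (hfpf : ∀ a, f a ≠ a) :
    Nat.card A = 2 * Nat.card (Quotient s) := by
  classical
  cases nonempty_fintype A
  have hsymm : ∀ a b, s.r a b → s.r b a := fun a b h => s.iseqv.symm h
  have hfib : ∀ q : Quotient s, Nat.card {b // Quotient.mk s b = q} = 2 := by
    refine Quotient.ind (fun a => ?_)
    have he : Bool ≃ {b // Quotient.mk s b = Quotient.mk s a} := by
      refine Equiv.ofBijective
        (fun x => if x then ⟨f a, Quotient.sound (hsymm _ _ ((hrel a (f a)).2 (Or.inr rfl)))⟩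
          else ⟨a, rfl⟩) ⟨?_, ?_⟩
      · intro x y hxy
        have hv := congrArg Subtype.val hxy
        cases x <;> cases y
        · rfl
        · simp only [if_true, if_false] at hv; exact absurd hv.symm (hfpf a)
        · simp only [if_true, if_false] at hv; exact absurd hv (hfpf a)
        · rfl
      · rintro ⟨b, hb⟩
        rcases (hrel a b).1 (hsymm _ _ (Quotient.exact hb)) with h | h
        · exact ⟨false, by simp [h]⟩
        · exact ⟨true, by simp [h]⟩
    rw [← Nat.card_congr he]
    simp
  have hA := Nat.card_congr (Equiv.sigmaFiberEquiv (Quotient.mk s)).symm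
  rw [hA]
  cases nonempty_fintype (Quotient s)
  rw [Nat.card_eq_fintype_card, Fintype.card_sigma]
  have hc : ∀ q : Quotient s, Fintype.card {b // Quotient.mk s b = q} = 2 := by
    intro q; rw [← Nat.card_eq_fintype_card, hfib]
  simp only [hc, Finset.sum_const, Finset.card_univ, smul_eq_mul,
    ← Nat.card_eq_fintype_card]
  ring

namespace Multigraph
namespace MixingInvolution

variable {G : Multigraph} (α : MixingInvolution G)

theorem del_connected (hG : G.Connected) (hg : 3 ≤ G.eulerGenus)
    (hq : α.quotient.eulerGenus = 1) (e : G.E) (he : ¬ α.Exchanged e)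
    (hconn : (α.quotient.deleteEdges {Quotient.mk α.eSetoid ⟨e, he⟩}).Connected) :
    (G.deleteEdges {e, α.emap e}).Connected := by
  classical
  set G₀ := G.deleteEdges {e, α.emap e} with hG₀
  set SG := G₀.toSimpleGraph with hSG
  -- the involution preserves adjacency of G₀
  have homAdj : ∀ a b : G₀.V, SG.Adj a b → SG.Adj (α.vmap a) (α.vmap b) := by
    intro a b hab
    obtain ⟨hne, hab⟩ := (SimpleGraph.fromRel_adj _ a b).1 hab
    refine (SimpleGraph.fromRel_adj _ _ _).2 ⟨fun h => hne (α.vmap.injective h), ?_⟩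
    rcases hab with ⟨f, hf⟩ | ⟨f, hf⟩
    · refine Or.inl ⟨α.delEmapFun e f, ?_⟩
      show G.ends (α.emap f.1) = _
      rw [α.ends_map]
      rw [show G₀.ends f = G.ends f.1 from rfl] at hf
      rw [hf]
      rfl
    · refine Or.inr ⟨α.delEmapFun e f, ?_⟩
      show G.ends (α.emap f.1) = _
      rw [α.ends_map]
      rw [show G₀.ends f = G.ends f.1 from rfl] at hf
      rw [hf]
      rfl
  have hmap : ∀ u v : G.V, SG.Reachable u v → SG.Reachable (α.vmap u) (α.vmap v) :=
    fun u v h => h.map ⟨α.vmap, fun {a b} hab => homAdj a b hab⟩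
  -- adjacency from an edge of G₀
  have hadj : ∀ (f : G₀.E) (x y : G.V), G.ends f.1 = s(x, y) → SG.Adj x y := by
    intro f x y hf
    refine (SimpleGraph.fromRel_adj _ _ _).2
      ⟨fun h => G.loopless f.1 (by rw [hf, Sym2.mk_isDiag_iff]; exact h), Or.inl ⟨f, hf⟩⟩
  set D := α.quotient.deleteEdges {Quotient.mk α.eSetoid ⟨e, he⟩} with hD
  -- lifting walks from the quotient
  have key : ∀ (a b : D.V) (w : D.toSimpleGraph.Walk a b) (u v : G.V),
      Quotient.mk α.vSetoid u = a → Quotient.mk α.vSetoid v = b →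
      SG.Reachable u v ∨ SG.Reachable u (α.vmap v) := by
    intro a b w
    induction w with
    | nil =>
      intro u v hu hv
      rcases Quotient.exact (hu.trans hv.symm) with h | h
      · exact Or.inl (by rw [h]; exact SimpleGraph.Reachable.refl u)
      · rw [h, α.vmap_invol]
        exact Or.inr (SimpleGraph.Reachable.refl u)
    | @cons a c b h p ih =>
      intro u v hu hv
      obtain ⟨hne, hrel⟩ := (SimpleGraph.fromRel_adj _ a c).1 h
      have hedge : ∃ f : D.E, D.ends f = s(a, c) := by
        rcases hrel with ⟨f, hf⟩ | ⟨f, hf⟩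
        · exact ⟨f, hf⟩
        · exact ⟨f, by rw [hf, Sym2.eq_swap]⟩
      obtain ⟨⟨q, hqe⟩, hf⟩ := hedge
      obtain ⟨g, rfl⟩ := Quotient.exists_rep q
      obtain ⟨x, y, hxy⟩ := sym2_exists_rep (G.ends g.1)
      have hf' : s(Quotient.mk α.vSetoid x, Quotient.mk α.vSetoid y) = s(a, c) := by
        have h0 : D.ends ⟨Quotient.mk α.eSetoid g, hqe⟩
            = (G.ends g.1).map (fun v => Quotient.mk α.vSetoid v) := rfl
        rw [h0, hxy, Sym2.map_pair_eq] at hf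
        exact hf
      have hmem : g.1 ∉ ({e, α.emap e} : Set G.E) := by
        rintro (hh | hh)
        · exact hqe (show Quotient.mk α.eSetoid g ∈ _ from by
            have hge : g = ⟨e, he⟩ := Subtype.ext hh
            rw [hge]; rfl)
        · refine hqe (show Quotient.mk α.eSetoid g ∈ _ from
            Quotient.sound (Or.inr ?_))
          have h' : g.1 = α.emap e := hh
          rw [h', α.emap_invol]
      have main : ∀ x y : G.V, G.ends g.1 = s(x, y) →
          Quotient.mk α.vSetoid x = a → Quotient.mk α.vSetoid y = c →
          SG.Reachable u v ∨ SG.Reachable u (α.vmap v) := by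
        intro x y hxy hxa hyc
        have hxyR : SG.Reachable x y := (hadj ⟨g.1, hmem⟩ x y hxy).reachable
        have step : SG.Reachable u y ∨ SG.Reachable u (α.vmap y) := by
          rcases Quotient.exact (hxa.trans hu.symm) with h1 | h1
          · rw [h1]; exact Or.inl hxyR
          · have h2 := hmap x y hxyR
            rw [show α.vmap x = u from h1.symm] at h2
            exact Or.inr h2
        have tail : SG.Reachable y v ∨ SG.Reachable y (α.vmap v) := ih y v hyc hv
        rcases step with h1 | h1 <;> rcases tail with h2 | h2
        · exact Or.inl (h1.trans h2)
        · exact Or.inr (h1.trans h2)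
        · exact Or.inr (h1.trans (hmap y v h2))
        · have h3 := hmap y (α.vmap v) h2
          rw [α.vmap_invol] at h3
          exact Or.inl (h1.trans h3)
      rcases Sym2.eq_iff.1 hf' with ⟨hxa, hyc⟩ | ⟨hxc, hya⟩
      · exact main x y hxy hxa hyc
      · exact main y x (by rw [hxy, Sym2.eq_swap]) hya hxc
  have P : ∀ u v : G.V, SG.Reachable u v ∨ SG.Reachable u (α.vmap v) := by
    intro u v
    obtain ⟨w⟩ := hconn.preconnected (Quotient.mk α.vSetoid u) (Quotient.mk α.vSetoid v)
    exact key _ _ w u v rfl rfl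
  by_cases hex : ∃ u₀ : G.V, SG.Reachable u₀ (α.vmap u₀)
  · obtain ⟨u₀, hu₀⟩ := hex
    have hall : ∀ v : G.V, SG.Reachable u₀ v := by
      intro v
      rcases P u₀ v with h | h
      · exact h
      · have h2 := hmap u₀ (α.vmap v) h
        rw [α.vmap_invol] at h2
        exact hu₀.trans h2
    haveI : Nonempty G₀.V := hG.nonempty
    exact SimpleGraph.Connected.mk (fun a b => (hall a).symm.trans (hall b))
  · push_neg at hex
    exfalso
    have hfpfV : ∀ v : G.V, α.vmap v ≠ v := by
      intro v hv
      exact hex v (by rw [hv]; exact SimpleGraph.Reachable.refl v)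
    have hnoex : ∀ f : G.E, ¬ α.Exchanged f := by
      rintro f ⟨x, y, hxy, hv⟩
      have hfe : f ≠ e := fun h => he (h ▸ ⟨x, y, hxy, hv⟩)
      have hfae : f ≠ α.emap e := by
        intro h
        exact he ((α.exchanged_emap_iff).1 (h ▸ ⟨x, y, hxy, hv⟩))
      have hmem : f ∉ ({e, α.emap e} : Set G.E) := by
        rintro (h | h)
        exacts [hfe h, hfae h]
      have hR := (hadj ⟨f, hmem⟩ x y hxy).reachable
      rw [← hv] at hR
      exact hex x hR
    have hfpfE : ∀ f : G.E, α.emap f ≠ f := fun f h => hnoex f (α.exchanged_of_emap_eq h)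
    have hcV : Nat.card G.V = 2 * Nat.card (Quotient α.vSetoid) :=
      two_mul_card_quotient α.vSetoid α.vmap (fun a b => Iff.rfl) hfpfV
    have hcE : Nat.card {f : G.E // ¬ α.Exchanged f}
        = 2 * Nat.card (Quotient α.eSetoid) := by
      refine two_mul_card_quotient α.eSetoid
        (fun f => ⟨α.emap f.1, fun h => f.2 ((α.exchanged_emap_iff).1 h)⟩) ?_ ?_
      · intro a b
        constructor
        · rintro (h | h)
          · exact Or.inl (Subtype.ext h)
          · exact Or.inr (Subtype.ext h)
        · rintro (h | h)
          · exact Or.inl (congrArg Subtype.val h)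
          · exact Or.inr (congrArg Subtype.val h)
      · intro a h
        exact hfpfE a.1 (congrArg Subtype.val h)
    have hcE' : Nat.card {f : G.E // ¬ α.Exchanged f} = Nat.card G.E :=
      Nat.card_congr (Equiv.subtypeUnivEquiv hnoex)
    unfold Multigraph.eulerGenus at hq hg
    have hqV : Nat.card α.quotient.V = Nat.card (Quotient α.vSetoid) := rfl
    have hqE : Nat.card α.quotient.E = Nat.card (Quotient α.eSetoid) := rfl
    rw [hqV, hqE] at hq
    omega

end MixingInvolution
end Multigraph

open Multigraph in
/-- If `G` is a 2-edge-connected loopless connected graph of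
genus at least 3, `α` a mixing involution whose quotient has genus one, `ē`
an edge of `G/α` (with preimages `e`, `e' = α e`) whose deletion leaves a
tree, then `G₀ = G - {e, e'}` is connected and the involution induced by `α`
on `G₀` is a mixing involution with tree quotient, so `G₀` is hyperelliptic. -/
theorem deleted_graph_is_hyperelliptic (G : Multigraph) (hG : G.Connected)
    (h2 : G.TwoEdgeConnected) (hg : 3 ≤ G.eulerGenus)
    (α : MixingInvolution G) (hq : α.quotient.eulerGenus = 1)
    (e : G.E) (he : ¬ α.Exchanged e)
    (htree : (α.quotient.deleteEdges {Quotient.mk α.eSetoid ⟨e, he⟩}).IsTree) :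
    (G.deleteEdges {e, α.emap e}).Connected ∧
    (∃ ι : MixingInvolution (G.deleteEdges {e, α.emap e}),
      (∀ v, ι.vmap v = α.vmap v) ∧
      (∀ f : (G.deleteEdges {e, α.emap e}).E, (ι.emap f).val = α.emap f.val) ∧
      ι.quotient.IsTree) ∧
    (G.deleteEdges {e, α.emap e}).Hyperelliptic := by
  have hconn := α.del_connected hG hg hq e he htree.1
  have htree' : (α.delInvol hG hg e).quotient.IsTree :=
    Iso.isTree_of (α.delInvolQuotientIso hG hg e he) htree
  exact ⟨hconn, ⟨α.delInvol hG hg e, fun v => rfl, fun f => rfl, htree'⟩,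
    hconn, α.delInvol hG hg e, htree'⟩
end
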